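/- arXiv:1912.05710 — 9 statements merged into one kernel-verified Lean document; each statement's English description precedes it below -/
import Mathlib

section
/- Let A and A' be r×r symmetrizable weak generalized Cartan matrices with a common right symmetrizer D (a positive integer diagonal matrix with AD and A'D symmetric). Let N = 2I − A, N' = 2I − A', and set A₊ = (1+z²)I − zN, A₋ = (1+z²)I − zN'. Then A₊ D A₋† = A₋ D A₊† (with A† = (A|_{z↦z⁻¹})ᵀ) if and only if AA' = A'A. -/
open LaurentPolynomial Matrix

/-- The `†` operation: substitute `z ↦ z⁻¹` in each entry, then transpose. -/
noncomputable def dagger {r : ℕ} (A : Matrix (Fin r) (Fin r) (LaurentPolynomial ℤ)) :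
    Matrix (Fin r) (Fin r) (LaurentPolynomial ℤ) :=
  (A.map (LaurentPolynomial.invert (R := ℤ))).transpose

/-- The entrywise coercion of an integer matrix into matrices over `ℤ[z,z⁻¹]`. -/
noncomputable def intMat {r : ℕ} (A : Matrix (Fin r) (Fin r) ℤ) :
    Matrix (Fin r) (Fin r) (LaurentPolynomial ℤ) :=
  A.map fun x => (x : LaurentPolynomial ℤ)

/-- `A₊ = (1+z²)I − zN` where `N = 2I − A`, as a matrix over `ℤ[z,z⁻¹]`. -/
noncomputable def cartanPlus {r : ℕ} (A : Matrix (Fin r) (Fin r) ℤ) :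
    Matrix (Fin r) (Fin r) (LaurentPolynomial ℤ) :=
  (1 + T 2 : LaurentPolynomial ℤ) • (1 : Matrix (Fin r) (Fin r) (LaurentPolynomial ℤ))
    - (T 1 : LaurentPolynomial ℤ) • intMat ((2 : ℤ) • (1 : Matrix (Fin r) (Fin r) ℤ) - A)

/-! Write `N = 2I − A`, so `A₊ = p I − q N` with `p = 1 + z²`, `q = z`, and `A₊† = p̄ I − q̄ Nᵀ`.
Since `D Nᵀ = N D` and `p q̄ = q p̄ = z + z⁻¹`, `q q̄ = 1`, expanding gives
`A₊ D A₋† = p p̄ D − (z + z⁻¹)(N + N') D + N N' D`. Only the last term is not symmetric in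
`N, N'`, so the identity is equivalent to `N N' D = N' N D`; cancelling the positive diagonal `D`
this says `N` and `N'` commute, i.e. `A` and `A'` commute. -/

section

variable {n R : Type*} [Fintype n] [DecidableEq n] [CommRing R]

lemma smul_one_sub_smul_mul_mul_smul_one_sub_smul_transpose (p q p' q' : R)
    (M N D : Matrix n n R) (hN : D * Nᵀ = N * D) :
    (p • 1 - q • M) * D * (p' • 1 - q' • Nᵀ)
      = (p * p') • D - (p * q') • (N * D) - (q * p') • (M * D) + (q * q') • (M * N * D) := by
  simp only [Matrix.sub_mul, Matrix.mul_sub, Matrix.smul_mul, Matrix.mul_smul, Matrix.one_mul,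
    Matrix.mul_one, Matrix.mul_assoc, hN]
  module

lemma sandwich_eq_sandwich_swap_iff {p q p' q' : R} (hpq : p * q' = q * p') (hq : q * q' = 1)
    {M N D : Matrix n n R} (hM : D * Mᵀ = M * D) (hN : D * Nᵀ = N * D) :
    (p • 1 - q • M) * D * (p' • 1 - q' • Nᵀ) = (p • 1 - q • N) * D * (p' • 1 - q' • Mᵀ)
      ↔ M * N * D = N * M * D := by
  rw [smul_one_sub_smul_mul_mul_smul_one_sub_smul_transpose _ _ _ _ _ _ _ hN,
    smul_one_sub_smul_mul_mul_smul_one_sub_smul_transpose _ _ _ _ _ _ _ hM, hpq, hq, one_smul,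
    one_smul, sub_right_comm _ ((q * p') • (N * D)), add_right_inj]

lemma mul_transpose_smul_one_sub {c : R} {B D : Matrix n n R} (hB : D * Bᵀ = B * D) :
    D * (c • 1 - B)ᵀ = (c • 1 - B) * D := by
  rw [transpose_sub, transpose_smul, transpose_one, Matrix.mul_sub, Matrix.sub_mul, hB,
    Matrix.mul_smul, Matrix.smul_mul, Matrix.mul_one, Matrix.one_mul]

lemma diagonal_mul_transpose_of_transpose_mul_diagonal {d : n → R} {B : Matrix n n R}
    (hB : (B * diagonal d)ᵀ = B * diagonal d) : diagonal d * Bᵀ = B * diagonal d := by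
  rw [← hB, transpose_mul, diagonal_transpose]

lemma mul_diagonal_left_inj [NoZeroDivisors R] {d : n → R} (hd : ∀ i, d i ≠ 0)
    {M N : Matrix n n R} : M * diagonal d = N * diagonal d ↔ M = N := by
  refine ⟨fun h => ?_, congrArg (· * diagonal d)⟩
  ext i j
  simpa only [mul_diagonal, mul_left_inj' (hd j)] using congrFun (congrFun h i) j

end

lemma commute_sub_sub_iff {α : Type*} [Ring α] {s a b : α} (hs : ∀ x, Commute s x) :
    Commute (s - a) (s - b) ↔ Commute a b := by
  have key : ∀ {a b : α}, Commute a b → Commute (s - a) (s - b) := fun h =>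
    (hs _).sub_left ((hs _).symm.sub_right h)
  exact ⟨fun h => by simpa only [sub_sub_cancel] using key h, key⟩

lemma intCast_injective : Function.Injective (Int.cast : ℤ → ℤ[T;T⁻¹]) := fun a b h => by
  simpa only [← eq_intCast (C : ℤ →+* ℤ[T;T⁻¹]), C_apply, if_true]
    using congrArg (fun f : ℤ[T;T⁻¹] => f.coeff 0) h

lemma intMat_injective {r : ℕ} : Function.Injective (intMat (r := r)) :=
  Matrix.map_injective intCast_injective

lemma intMat_mul {r : ℕ} (X Y : Matrix (Fin r) (Fin r) ℤ) :
    intMat (X * Y) = intMat X * intMat Y :=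
  Matrix.map_mul (f := Int.castRingHom ℤ[T;T⁻¹])

lemma intMat_diagonal {r : ℕ} (d : Fin r → ℤ) :
    intMat (diagonal d) = diagonal fun i => C (d i) := by
  rw [intMat, diagonal_map Int.cast_zero]
  exact congrArg diagonal (funext fun i => (eq_intCast (C : ℤ →+* ℤ[T;T⁻¹]) (d i)).symm)

lemma intMat_transpose {r : ℕ} (X : Matrix (Fin r) (Fin r) ℤ) : (intMat X)ᵀ = intMat Xᵀ :=
  transpose_map.symm

lemma intMat_mul_transpose {r : ℕ} {X Y : Matrix (Fin r) (Fin r) ℤ} (h : X * Yᵀ = Y * X) :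
    intMat X * (intMat Y)ᵀ = intMat Y * intMat X := by
  rw [intMat_transpose, ← intMat_mul, ← intMat_mul, h]

lemma dagger_cartanPlus {r : ℕ} (B : Matrix (Fin r) (Fin r) ℤ) :
    dagger (cartanPlus B) = (1 + T (-2) : ℤ[T;T⁻¹]) • 1
      - (T (-1) : ℤ[T;T⁻¹]) • (intMat ((2 : ℤ) • (1 : Matrix (Fin r) (Fin r) ℤ) - B))ᵀ := by
  ext i j
  rcases eq_or_ne i j with rfl | h
  · simp [dagger, cartanPlus, intMat]
  · simp [dagger, cartanPlus, intMat, one_apply_ne h, one_apply_ne h.symm]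

theorem stmt5_general (r : ℕ) (A A' : Matrix (Fin r) (Fin r) ℤ)
    (d : Fin r → ℤ) (hd : ∀ i, 0 < d i)
    -- with common right symmetrizer `D = diag d`:
    (hsym : (A * Matrix.diagonal d).transpose = A * Matrix.diagonal d)
    (hsym' : (A' * Matrix.diagonal d).transpose = A' * Matrix.diagonal d) :
    cartanPlus A * (Matrix.diagonal fun i => LaurentPolynomial.C (d i)) * dagger (cartanPlus A')
      = cartanPlus A' * (Matrix.diagonal fun i => LaurentPolynomial.C (d i)) * dagger (cartanPlus A)
    ↔ A * A' = A' * A := by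
  have hpq : (1 + T 2 : ℤ[T;T⁻¹]) * T (-1) = T 1 * (1 + T (-2)) := by
    rw [add_mul, mul_add, ← T_add, ← T_add]; norm_num [add_comm]
  have hq : (T 1 : ℤ[T;T⁻¹]) * T (-1) = 1 := by rw [← T_add]; norm_num
  have hN := intMat_mul_transpose <| mul_transpose_smul_one_sub (c := 2) <|
    diagonal_mul_transpose_of_transpose_mul_diagonal hsym
  have hN' := intMat_mul_transpose <| mul_transpose_smul_one_sub (c := 2) <|
    diagonal_mul_transpose_of_transpose_mul_diagonal hsym'
  rw [dagger_cartanPlus, dagger_cartanPlus, cartanPlus, cartanPlus, ← intMat_diagonal,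
    sandwich_eq_sandwich_swap_iff hpq hq hN hN', ← intMat_mul, ← intMat_mul, ← intMat_mul,
    ← intMat_mul, intMat_injective.eq_iff, mul_diagonal_left_inj fun i => (hd i).ne',
    ← commute_iff_eq, ← commute_iff_eq,
    commute_sub_sub_iff fun x => (Commute.one_left x).smul_left _]

theorem stmt5 (r : ℕ) (A A' : Matrix (Fin r) (Fin r) ℤ)
    (d : Fin r → ℤ) (hd : ∀ i, 0 < d i)
    -- `A` and `A'` are symmetrizable weak generalized Cartan matrices:
    (hdiag : ∀ a, A a a ≤ 2) (hdiag' : ∀ a, A' a a ≤ 2)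
    (hoff : ∀ a b, a ≠ b → A a b ≤ 0) (hoff' : ∀ a b, a ≠ b → A' a b ≤ 0)
    -- with common right symmetrizer `D = diag d`:
    (hsym : (A * Matrix.diagonal d).transpose = A * Matrix.diagonal d)
    (hsym' : (A' * Matrix.diagonal d).transpose = A' * Matrix.diagonal d) :
    cartanPlus A * (Matrix.diagonal fun i => LaurentPolynomial.C (d i)) * dagger (cartanPlus A')
      = cartanPlus A' * (Matrix.diagonal fun i => LaurentPolynomial.C (d i)) * dagger (cartanPlus A)
    ↔ A * A' = A' * A :=
  stmt5_general r A A' d hd hsym hsym'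
end

section
/- Let A be a real square matrix whose off-diagonal entries are all non-positive. Then the following are equivalent: (1) there exists a vector v with all entries strictly positive such that Av has all entries strictly positive; (2) every real eigenvalue of A is positive. -/
open Matrix

open Filter Topology

/-!
Write `v > 0` for a vector with positive entries. For a Z-matrix `A` with `A v > 0`, `v > 0`,
compare any vector `x` having a positive entry with `v` at an index `k` maximising `x k / v k`:
the non-positive off-diagonal entries give `x k (A v) k ≤ (A x) k v k`, so `(A x) k > 0`.
Applied to an eigenvector this shows every real eigenvalue is positive, and applied to `-y` it
shows `A y ≥ 0 → y ≥ 0`; in particular `A` is invertible.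

Conversely, if no real eigenvalue is `≤ 0`, then `A + t • 1` is invertible for all `t ≥ 0`.
The set of `t` for which `A + t • 1` has a positive witness `v` is open and contains all large
`t`; it is also closed in `[0, ∞)`, because the vectors `(A + t • 1)⁻¹ 1 ≥ 0` converge to
`(A + t₀ • 1)⁻¹ 1`, which is then `≥ 0` and in fact `> 0`. By connectedness it contains `t = 0`.
-/

theorem exists_forall_mul_le_mul {n 𝕜 : Type*} [Finite n] [Field 𝕜] [LinearOrder 𝕜]
    [IsStrictOrderedRing 𝕜] {v : n → 𝕜} (hv : ∀ i, 0 < v i) (x : n → 𝕜) [Nonempty n] :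
    ∃ k, ∀ j, x j * v k ≤ x k * v j := by
  obtain ⟨k, hk⟩ := Finite.exists_max fun i => x i / v i
  exact ⟨k, fun j => (div_le_div_iff₀ (hv j) (hv k)).1 (hk j)⟩

namespace Matrix

variable {n R : Type*}

def IsZMatrix [Zero R] [LE R] (A : Matrix n n R) : Prop :=
  ∀ i j, i ≠ j → A i j ≤ 0

def IsSemipositive [Fintype n] [Semiring R] [PartialOrder R] (A : Matrix n n R) : Prop :=
  ∃ v : n → R, (∀ i, 0 < v i) ∧ ∀ i, 0 < (A *ᵥ v) i

theorem IsZMatrix.add_smul_one [DecidableEq n] [Semiring R] [Preorder R] {A : Matrix n n R}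
    (hA : A.IsZMatrix) (t : R) : (A + t • 1).IsZMatrix := fun i j hij => by
  simpa [one_apply_ne hij] using hA i j hij

section LinearOrderedField

variable {𝕜 : Type*} [Fintype n] [Field 𝕜] [LinearOrder 𝕜] [IsStrictOrderedRing 𝕜]
  {A : Matrix n n 𝕜}

theorem IsZMatrix.mul_mulVec_le_mulVec_mul (hA : A.IsZMatrix) {v x : n → 𝕜} {k : n}
    (hk : ∀ j, x j * v k ≤ x k * v j) : x k * (A *ᵥ v) k ≤ (A *ᵥ x) k * v k := by
  simp only [mulVec, dotProduct, Finset.mul_sum, Finset.sum_mul]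
  refine Finset.sum_le_sum fun j _ => ?_
  rcases eq_or_ne j k with rfl | hjk
  · exact le_of_eq (by ring)
  · nlinarith [mul_le_mul_of_nonpos_left (hk j) (hA k j hjk.symm)]

theorem IsZMatrix.exists_pos_mulVec_pos (hA : A.IsZMatrix) (hS : A.IsSemipositive)
    {x : n → 𝕜} (hx : ∃ i, 0 < x i) : ∃ k, 0 < x k ∧ 0 < (A *ᵥ x) k := by
  obtain ⟨v, hv, hAv⟩ := hS
  obtain ⟨i, hi⟩ := hx
  have : Nonempty n := ⟨i⟩
  obtain ⟨k, hk⟩ := exists_forall_mul_le_mul hv x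
  have hxk : 0 < x k := pos_of_mul_pos_left ((mul_pos hi (hv k)).trans_le (hk i)) (hv i).le
  refine ⟨k, hxk, pos_of_mul_pos_left ?_ (hv k).le⟩
  exact (mul_pos hxk (hAv k)).trans_le (hA.mul_mulVec_le_mulVec_mul hk)

theorem IsZMatrix.nonneg_of_mulVec_nonneg (hA : A.IsZMatrix) (hS : A.IsSemipositive)
    {y : n → 𝕜} (hy : ∀ i, 0 ≤ (A *ᵥ y) i) (i : n) : 0 ≤ y i := by
  by_contra! hyi
  obtain ⟨k, -, hk⟩ := hA.exists_pos_mulVec_pos hS (x := -y) ⟨i, by simpa using hyi⟩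
  rw [mulVec_neg, Pi.neg_apply, neg_pos] at hk
  exact (hy k).not_gt hk

theorem IsZMatrix.det_ne_zero [DecidableEq n] (hA : A.IsZMatrix) (hS : A.IsSemipositive) :
    A.det ≠ 0 := by
  intro hdet
  obtain ⟨y, hy, hAy⟩ := exists_mulVec_eq_zero_iff.2 hdet
  refine hy (funext fun i => le_antisymm ?_ ?_)
  · simpa using hA.nonneg_of_mulVec_nonneg hS (y := -y) (by simp [mulVec_neg, hAy]) i
  · exact hA.nonneg_of_mulVec_nonneg hS (by simp [hAy]) i

theorem IsZMatrix.pos_of_mulVec_pos (hA : A.IsZMatrix) {u : n → 𝕜} (hu : ∀ j, 0 ≤ u j)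
    {i : n} (hi : 0 < (A *ᵥ u) i) : 0 < u i := by
  refine (hu i).lt_of_ne fun hui => hi.not_ge (Finset.sum_nonpos fun j _ => ?_)
  rcases eq_or_ne i j with rfl | hij
  · simp [← hui]
  · exact mul_nonpos_of_nonpos_of_nonneg (hA i j hij) (hu j)

theorem IsZMatrix.pos_of_mulVec_eq_smul (hA : A.IsZMatrix) (hS : A.IsSemipositive)
    {x : n → 𝕜} (hx : x ≠ 0) {μ : 𝕜} (hμ : A *ᵥ x = μ • x) : 0 < μ := by
  wlog hpos : ∃ i, 0 < x i generalizing x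
  · obtain ⟨i, hi⟩ := Function.ne_iff.1 hx
    refine this (neg_ne_zero.2 hx) (by rw [mulVec_neg, hμ, smul_neg]) ⟨i, ?_⟩
    simp only [not_exists, not_lt] at hpos
    simpa using (hpos i).lt_of_ne hi
  obtain ⟨k, hxk, hk⟩ := hA.exists_pos_mulVec_pos hS hpos
  rw [hμ, Pi.smul_apply, smul_eq_mul] at hk
  exact pos_of_mul_pos_left hk hxk.le

theorem IsZMatrix.pos_of_mem_spectrum [DecidableEq n] (hA : A.IsZMatrix)
    (hS : A.IsSemipositive) {μ : 𝕜} (hμ : μ ∈ spectrum 𝕜 A) : 0 < μ := by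
  rw [← spectrum_toLin', ← Module.End.hasEigenvalue_iff_mem_spectrum] at hμ
  obtain ⟨x, hx, hx0⟩ := hμ.exists_hasEigenvector
  exact hA.pos_of_mulVec_eq_smul hS hx0 (by simpa using Module.End.mem_eigenspace_iff.1 hx)

theorem eventually_isSemipositive_add_smul_one [DecidableEq n] (A : Matrix n n 𝕜) :
    ∀ᶠ t : 𝕜 in atTop, (A + t • 1).IsSemipositive := by
  filter_upwards [eventually_all.2 fun i => eventually_gt_atTop (-(A *ᵥ 1) i)]
    with t ht
  refine ⟨1, fun _ => one_pos, fun i => ?_⟩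
  rw [add_mulVec, smul_mulVec, one_mulVec, Pi.add_apply, add_comm]
  simpa [neg_lt_iff_pos_add] using ht i

theorem det_add_smul_one_ne_zero [DecidableEq n] {t : 𝕜} (ht : -t ∉ spectrum 𝕜 A) :
    (A + t • 1).det ≠ 0 := by
  rw [spectrum.mem_iff, not_not, Algebra.algebraMap_eq_smul_one, isUnit_iff_isUnit_det,
    isUnit_iff_ne_zero] at ht
  rwa [show -t • 1 - A = -(A + t • 1) by module, det_neg, mul_ne_zero_iff, and_iff_right] at ht
  exact pow_ne_zero _ (neg_ne_zero.2 one_ne_zero)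

end LinearOrderedField

section Real

variable [Fintype n]

theorem isOpen_setOf_isSemipositive :
    IsOpen {A : Matrix n n ℝ | A.IsSemipositive} := by
  have : {A : Matrix n n ℝ | A.IsSemipositive} =
      ⋃ v ∈ {v : n → ℝ | ∀ i, 0 < v i}, ⋂ i, {A | 0 < (A *ᵥ v) i} := by
    ext A
    simp [IsSemipositive]
  rw [this]
  exact isOpen_biUnion fun v _ => isOpen_iInter_of_finite fun i =>
    isOpen_lt continuous_const
      ((continuous_apply i).comp (continuous_id.matrix_mulVec continuous_const))

variable [DecidableEq n]

theorem IsZMatrix.isSemipositive_of_tendsto {B : Matrix n n ℝ} (hB : B.IsZMatrix)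
    (hdet : B.det ≠ 0) {ι : Type*} {l : Filter ι} [l.NeBot] {M : ι → Matrix n n ℝ}
    (hM : Tendsto M l (𝓝 B)) (hMZ : ∀ᶠ k in l, (M k).IsZMatrix ∧ (M k).IsSemipositive) :
    B.IsSemipositive := by
  have hinv : Tendsto (fun k => (M k)⁻¹ *ᵥ 1) l (𝓝 (B⁻¹ *ᵥ 1)) := by
    have : ContinuousAt Inv.inv B := continuousAt_matrix_inv B <| by
      simpa [Ring.inverse_eq_inv'] using continuousAt_inv₀ hdet
    exact ((continuous_id.matrix_mulVec continuous_const).tendsto _).comp (this.tendsto.comp hM)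
  have hu : 0 ≤ B⁻¹ *ᵥ 1 := isClosed_Ici.mem_of_tendsto hinv <| hMZ.mono fun k ⟨hZ, hS⟩ => by
    refine Pi.le_def.2 (hZ.nonneg_of_mulVec_nonneg hS fun i => ?_)
    rw [mulVec_mulVec, mul_nonsing_inv _ (isUnit_iff_ne_zero.2 (hZ.det_ne_zero hS)), one_mulVec]
    exact zero_le_one
  have hBu : B *ᵥ (B⁻¹ *ᵥ 1) = 1 := by
    rw [mulVec_mulVec, mul_nonsing_inv _ (isUnit_iff_ne_zero.2 hdet), one_mulVec]
  refine ⟨B⁻¹ *ᵥ 1, fun i => hB.pos_of_mulVec_pos (Pi.le_def.1 hu) ?_, fun i => ?_⟩ <;>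
    simp [hBu]

theorem IsZMatrix.isSemipositive_of_spectrum_pos {A : Matrix n n ℝ} (hA : A.IsZMatrix)
    (hspec : ∀ μ ∈ spectrum ℝ A, 0 < μ) : A.IsSemipositive := by
  let S := {t : ℝ | (A + t • 1).IsSemipositive}
  have hdet (t : ℝ) (ht : 0 ≤ t) : (A + t • 1).det ≠ 0 :=
    det_add_smul_one_ne_zero fun h => (hspec _ h).not_ge (neg_nonpos.2 ht)
  have hcont : Continuous fun t : ℝ => A + t • 1 := by fun_prop
  have hclosed : closure S ∩ Set.Ici 0 ⊆ S := fun t ⟨htS, ht⟩ => by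
    have := mem_closure_iff_nhdsWithin_neBot.1 htS
    exact (hA.add_smul_one t).isSemipositive_of_tendsto (hdet t ht)
      (hcont.continuousWithinAt (s := S) (x := t))
      (eventually_nhdsWithin_of_forall fun s hs => ⟨hA.add_smul_one s, hs⟩)
  have hIci : Set.Ici (0 : ℝ) ⊆ S :=
    isPreconnected_Ici.subset_of_closure_inter_subset
      (isOpen_setOf_isSemipositive.preimage hcont)
      (((eventually_ge_atTop 0).and (eventually_isSemipositive_add_smul_one A)).exists) hclosed
  simpa [S] using hIci Set.self_mem_Ici

end Real

end Matrix

theorem stmt7 (r : ℕ) (A : Matrix (Fin r) (Fin r) ℝ)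
    (hoff : ∀ i j, i ≠ j → A i j ≤ 0) :
    (∃ v : Fin r → ℝ, (∀ i, 0 < v i) ∧ (∀ i, 0 < A.mulVec v i)) ↔
      (∀ μ : ℝ, μ ∈ spectrum ℝ A → 0 < μ) := by
  have hA : A.IsZMatrix := hoff
  exact ⟨fun hS _ => hA.pos_of_mem_spectrum hS, hA.isSemipositive_of_spectrum_pos⟩
end

section
/- Let K be a real symmetric r×r matrix such that for every λ ≥ 0, the matrix A₋ + λA₊ has all real eigenvalues positive, where A₊, A₋ are invertible real matrices with K = A₊⁻¹A₋ and A₋ + λA₊ has non-positive off-diagonal entries for λ ≥ 0, and suppose there exists v > 0 with A₊ᵀv > 0 and A₋ᵀv > 0, where all off-diagonal entries of A₊ and A₋ are non-positive. Then K is positive definite. -/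
/-! Since `Ap⁻¹ * Am - μ • 1 = Ap⁻¹ * (Am + (-μ) • Ap)`, an eigenvalue `μ ≤ 0` of the symmetric
matrix `K` would put `0` in the spectrum of `Am + (-μ) • Ap`, which is excluded for `-μ ≥ 0`. -/

open Matrix

theorem Matrix.mem_spectrum_nonsing_inv_mul_iff {n R : Type*} [Fintype n] [DecidableEq n]
    [CommRing R] {A B : Matrix n n R} (hA : IsUnit A.det) (μ : R) :
    μ ∈ spectrum R (A⁻¹ * B) ↔ 0 ∈ spectrum R (B - μ • A) := by
  have hfactor : algebraMap R (Matrix n n R) μ - A⁻¹ * B = -(A⁻¹ * (B - μ • A)) := by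
    rw [Matrix.mul_sub, Matrix.mul_smul, Matrix.nonsing_inv_mul _ hA,
      Algebra.algebraMap_eq_smul_one, neg_sub]
  rw [spectrum.mem_iff, spectrum.zero_mem_iff, hfactor, IsUnit.neg_iff,
    (isUnit_nonsing_inv_iff.2 ((isUnit_iff_isUnit_det A).2 hA)).mul_left_iff]

theorem stmt8_general (r : ℕ) (Ap Am : Matrix (Fin r) (Fin r) ℝ)
    (hp : IsUnit Ap.det)
    (heig : ∀ l : ℝ, 0 ≤ l → ∀ μ ∈ spectrum ℝ (Am + l • Ap), 0 < μ)
    (K : Matrix (Fin r) (Fin r) ℝ) (hK : K = Ap⁻¹ * Am) (hsymm : K.transpose = K) :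
    K.PosDef := by
  have hK_herm : K.IsHermitian := by
    rwa [IsHermitian, conjTranspose_eq_transpose_of_trivial]
  refine hK_herm.posDef_iff_eigenvalues_pos.2 fun i => ?_
  set μ := hK_herm.eigenvalues i
  by_contra hμ
  have hμ_spec : 0 ∈ spectrum ℝ (Am + (-μ) • Ap) := by
    rw [neg_smul, ← sub_eq_add_neg, ← mem_spectrum_nonsing_inv_mul_iff hp, ← hK]
    exact hK_herm.eigenvalues_mem_spectrum_real i
  exact lt_irrefl 0 (heig (-μ) (by linarith) 0 hμ_spec)

theorem stmt8 (r : ℕ) (Ap Am : Matrix (Fin r) (Fin r) ℝ)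
    (hp : IsUnit Ap.det) (hm : IsUnit Am.det)
    (hoffp : ∀ i j, i ≠ j → Ap i j ≤ 0) (hoffm : ∀ i j, i ≠ j → Am i j ≤ 0)
    (heig : ∀ l : ℝ, 0 ≤ l → ∀ μ ∈ spectrum ℝ (Am + l • Ap), 0 < μ)
    (hv : ∃ v : Fin r → ℝ, (∀ i, 0 < v i) ∧
      (∀ i, 0 < Ap.transpose.mulVec v i) ∧ (∀ i, 0 < Am.transpose.mulVec v i))
    (K : Matrix (Fin r) (Fin r) ℝ) (hK : K = Ap⁻¹ * Am) (hsymm : K.transpose = K) :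
    K.PosDef :=
  stmt8_general r Ap Am hp heig K hK hsymm
end

section
/- Let K be an r×r positive definite symmetric matrix with rational entries and d₁,…,d_r positive rationals. Then the function F(x) = ½ xᵀKx + Σ_{a=1}^r d_a⁻¹ Li₂(exp(−d_a x_a)) on (0,∞)^r has at most one critical point; equivalently, the system of equations f_a = ∏_{b=1}^r (1−f_b)^{κ_{ab}} (a = 1,…,r) has at most one real solution with 0 < f_a < 1 for all a, where K = (κ_{ab}). -/
/-! Writing `x_a = -log (1 - f_a)`, the equations say `K x = -log f`. Since `f ↦ -log (1 - f)` is
increasing and `f ↦ -log f` decreasing on `(0, 1)`, two solutions `f, g` satisfy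
`(x_f - x_g) ⬝ K (x_f - x_g) ≤ 0`, which forces `x_f = x_g` by positive definiteness. -/

open Matrix

theorem Matrix.PosDef.eq_of_mul_mulVec_sub_nonpos {n : Type*} [Fintype n] {M : Matrix n n ℝ}
    (hM : M.PosDef) {x y : n → ℝ} (h : ∀ a, (x a - y a) * ((M *ᵥ x) a - (M *ᵥ y) a) ≤ 0) :
    x = y := by
  by_contra hne
  have hpos := hM.dotProduct_mulVec_pos (sub_ne_zero.mpr hne)
  have hnonpos : star (x - y) ⬝ᵥ M *ᵥ (x - y) ≤ 0 :=
    Finset.sum_nonpos fun a _ => by simpa [mulVec_sub] using h a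
  exact hnonpos.not_gt hpos

theorem Real.log_one_sub_sub_mul_log_sub_nonpos {s t : ℝ} (hs : 0 < s) (ht : 0 < t)
    (hs1 : s < 1) (ht1 : t < 1) :
    (Real.log (1 - s) - Real.log (1 - t)) * (Real.log s - Real.log t) ≤ 0 := by
  rcases le_total s t with hst | hts
  · exact mul_nonpos_of_nonneg_of_nonpos
      (sub_nonneg.mpr (Real.log_le_log (by linarith) (by linarith)))
      (sub_nonpos.mpr (Real.log_le_log hs hst))
  · exact mul_nonpos_of_nonpos_of_nonneg
      (sub_nonpos.mpr (Real.log_le_log (by linarith) (by linarith)))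
      (sub_nonneg.mpr (Real.log_le_log ht hts))

theorem mulVec_neg_log_one_sub_of_eq_prod_rpow {n : Type*} [Fintype n] (M : Matrix n n ℝ)
    {f : n → ℝ} (hf1 : ∀ a, f a < 1) (hfix : ∀ a, f a = ∏ b, (1 - f b) ^ M a b) :
    M *ᵥ (fun b => -Real.log (1 - f b)) = fun a => -Real.log (f a) := by
  funext a
  have hpos : ∀ b, 0 < 1 - f b := fun b => sub_pos.mpr (hf1 b)
  calc (M *ᵥ fun b => -Real.log (1 - f b)) a
      = -∑ b, Real.log ((1 - f b) ^ M a b) := by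
        simp only [mulVec, dotProduct, Real.log_rpow (hpos _), ← Finset.sum_neg_distrib, mul_neg]
    _ = -Real.log (f a) := by
        rw [← Real.log_prod fun b _ => (Real.rpow_pos_of_pos (hpos b) _).ne', ← hfix a]

theorem stmt9_general (r : ℕ) (K : Matrix (Fin r) (Fin r) ℚ)
    (hpos : (K.map fun x : ℚ => (x : ℝ)).PosDef) :
    ∀ f g : Fin r → ℝ,
      (∀ a, 0 < f a ∧ f a < 1) → (∀ a, 0 < g a ∧ g a < 1) →
      (∀ a, f a = ∏ b, (1 - f b) ^ ((K a b : ℝ))) →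
      (∀ a, g a = ∏ b, (1 - g b) ^ ((K a b : ℝ))) →
      f = g := by
  intro f g hf hg hfix hgix
  have hKf := mulVec_neg_log_one_sub_of_eq_prod_rpow (K.map (↑)) (fun a => (hf a).2) hfix
  have hKg := mulVec_neg_log_one_sub_of_eq_prod_rpow (K.map (↑)) (fun a => (hg a).2) hgix
  have hx := hpos.eq_of_mul_mulVec_sub_nonpos (x := fun b => -Real.log (1 - f b))
      (y := fun b => -Real.log (1 - g b)) fun a => by
    rw [hKf, hKg]
    have := Real.log_one_sub_sub_mul_log_sub_nonpos (hg a).1 (hf a).1 (hg a).2 (hf a).2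
    linarith
  funext a
  have hlog : Real.log (1 - f a) = Real.log (1 - g a) := neg_inj.mp (congrFun hx a)
  have := Real.log_injOn_pos (sub_pos.mpr (hf a).2) (sub_pos.mpr (hg a).2) hlog
  linarith

theorem stmt9 (r : ℕ) (K : Matrix (Fin r) (Fin r) ℚ) (d : Fin r → ℚ)
    (hd : ∀ a, 0 < d a)
    (hsym : K.transpose = K)
    (hpos : (K.map fun x : ℚ => (x : ℝ)).PosDef) :
    ∀ f g : Fin r → ℝ,
      (∀ a, 0 < f a ∧ f a < 1) → (∀ a, 0 < g a ∧ g a < 1) →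
      (∀ a, f a = ∏ b, (1 - f b) ^ ((K a b : ℝ))) →
      (∀ a, g a = ∏ b, (1 - g b) ^ ((K a b : ℝ))) →
      f = g :=
  stmt9_general r K hpos
end

section
/- The system f₁ = (1−f₁)^{4/3}(1−f₂)^{2/3}, f₂ = (1−f₁)^{2/3}(1−f₂)^{4/3} has a unique solution with 0 < f₁, f₂ < 1, and for this solution (6/π²)(L(f₁) + L(f₂)) = 4/5, where L(x) = Li₂(x) + ½ log(x) log(1−x) is the Rogers dilogarithm. -/
/-- The dilogarithm function `Li₂(x) = Σ_{n≥1} xⁿ/n²`. -/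
noncomputable def Li2 (x : ℝ) : ℝ := ∑' n : ℕ, x ^ (n + 1) / ((n : ℝ) + 1) ^ 2

/-- The Rogers dilogarithm `L(x) = Li₂(x) + ½ log(x) log(1−x)`. -/
noncomputable def RogersL (x : ℝ) : ℝ := Li2 x + (1 / 2) * Real.log x * Real.log (1 - x)

/-!
Both equations force `f₁ = f₂ = x` with `x = (1 - x)²`, so `1 - x = φ⁻¹ =: ρ` and `x = ρ²`.
The value of the Rogers dilogarithm at `ρ²` comes from two functional equations, each proved by
showing that the defect has zero derivative on `(0, 1)` and vanishes as `x → 0⁺`: Euler's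
reflection `L(x) + L(1 - x) = π²/6` and the duplication formula
`L(x²) = 2 L(x) - 2 L(x / (1 + x))`. Since `1 - ρ = ρ / (1 + ρ) = ρ²`, they give
`L(ρ) + L(ρ²) = π²/6` and `3 L(ρ²) = 2 L(ρ)`, hence `L(ρ²) = π²/15`.
-/

open Real Filter Set Topology
open scoped goldenRatio

lemma Li2_zero : Li2 0 = 0 := by
  simp [Li2]

lemma Li2_one : Li2 1 = π ^ 2 / 6 := by
  simpa [Li2] using ((hasSum_nat_add_iff' 1).2 hasSum_zeta_two).tsum_eq

lemma continuousOn_Li2 : ContinuousOn Li2 (Icc (-1) 1) := by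
  refine continuousOn_tsum (u := fun n : ℕ => 1 / ((n : ℝ) + 1) ^ 2) (fun n => by fun_prop) ?_ ?_
  · exact_mod_cast (summable_nat_add_iff 1).2 (Real.summable_one_div_nat_pow.2 one_lt_two)
  · intro n x hx
    rw [norm_div, norm_pow, norm_pow, Real.norm_eq_abs, Real.norm_of_nonneg (by positivity)]
    gcongr
    exact pow_le_one₀ (abs_nonneg x) (abs_le.2 hx)

lemma hasDerivAt_Li2 {x : ℝ} (hx₀ : x ≠ 0) (hx : |x| < 1) :
    HasDerivAt Li2 (-log (1 - x) / x) x := by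
  obtain ⟨r, hxr, hr₁⟩ := exists_between hx
  have hr₀ : 0 < r := (abs_nonneg x).trans_lt hxr
  have hderiv : HasDerivAt Li2 (∑' n : ℕ, x ^ n / ((n : ℝ) + 1)) x := by
    refine hasDerivAt_tsum_of_isPreconnected (g := fun (n : ℕ) (y : ℝ) => y ^ (n + 1) / ((n : ℝ) + 1) ^ 2)
      (g' := fun (n : ℕ) (y : ℝ) => y ^ n / ((n : ℝ) + 1)) (u := fun n => r ^ n)
      (summable_geometric_of_lt_one hr₀.le hr₁) isOpen_Ioo (convex_Ioo (-r) r).isPreconnected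
      (fun n y _ => ?_) (fun n y hy => ?_) (y₀ := 0) ⟨by linarith, hr₀⟩ (by simp) (abs_lt.1 hxr)
    · refine ((hasDerivAt_pow (n + 1) y).div_const (((n : ℝ) + 1) ^ 2)).congr_deriv ?_
      push_cast
      field_simp
    · rw [norm_div, norm_pow, Real.norm_eq_abs, Real.norm_of_nonneg (by positivity)]
      calc |y| ^ n / ((n : ℝ) + 1) ≤ |y| ^ n := div_le_self (by positivity) (by simp)
        _ ≤ r ^ n := pow_le_pow_left₀ (abs_nonneg y) (abs_le.2 ⟨hy.1.le, hy.2.le⟩) n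
  have hlog : HasSum (fun n : ℕ => x ^ n / ((n : ℝ) + 1)) (-log (1 - x) / x) := by
    have h := (hasSum_pow_div_log_of_abs_lt_one hx).div_const x
    rwa [show (fun n : ℕ => x ^ (n + 1) / (n + 1) / x) = fun n : ℕ => x ^ n / ((n : ℝ) + 1) by
      funext n; field_simp; ring] at h
  rwa [hlog.tsum_eq] at hderiv

lemma hasDerivAt_RogersL {x : ℝ} (hx : x ∈ Ioo 0 1) :
    HasDerivAt RogersL (-(log (1 - x) / x + log x / (1 - x)) / 2) x := by
  obtain ⟨hx₀, hx₁⟩ := hx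
  have hlog : HasDerivAt (fun y => log (1 - y)) (-(1 - x)⁻¹) x := by
    simpa [div_eq_mul_inv] using ((hasDerivAt_id' x).const_sub 1).log (sub_pos.2 hx₁).ne'
  have hLi2 := hasDerivAt_Li2 hx₀.ne' (abs_lt.2 ⟨by linarith, hx₁⟩)
  refine (hLi2.add (((hasDerivAt_log hx₀.ne').const_mul (1 / 2)).mul hlog)).congr_deriv ?_
  have : 1 - x ≠ 0 := by linarith
  field_simp
  ring

lemma tendsto_log_mul_log_one_sub_nhdsGT_zero :
    Tendsto (fun x => log x * log (1 - x)) (𝓝[>] 0) (𝓝 0) := by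
  have hmul_log : Tendsto (fun x : ℝ => x * log x) (𝓝[>] 0) (𝓝 0) :=
    (continuous_mul_log.tendsto' 0 0 (by simp)).mono_left nhdsWithin_le_nhds
  have hslope : Tendsto (fun x : ℝ => x⁻¹ * log (1 - x)) (𝓝[>] 0) (𝓝 (-1)) := by
    have hd : HasDerivAt (fun y : ℝ => log (1 - y)) (-1) 0 := by
      simpa using ((hasDerivAt_id (0 : ℝ)).const_sub 1).log (by norm_num)
    simpa using hd.tendsto_slope_zero_right
  have h := hmul_log.mul hslope
  rw [zero_mul] at h
  refine h.congr' (eventually_nhdsWithin_of_forall fun x (hx : 0 < x) => ?_)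
  field_simp

lemma tendsto_RogersL_nhdsGT_zero : Tendsto RogersL (𝓝[>] 0) (𝓝 0) := by
  have hLi2 : Tendsto Li2 (𝓝[>] 0) (𝓝 0) := by
    have := (continuousOn_Li2.continuousAt
      (Icc_mem_nhds (show (-1 : ℝ) < 0 by norm_num) zero_lt_one)).tendsto
    rw [Li2_zero] at this
    exact this.mono_left nhdsWithin_le_nhds
  have h := hLi2.add (tendsto_log_mul_log_one_sub_nhdsGT_zero.const_mul (1 / 2))
  rw [mul_zero, add_zero] at h
  exact h.congr fun x => by simp only [RogersL, mul_assoc]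

lemma eqOn_Ioo_of_hasDerivAt_zero {F : ℝ → ℝ} {a b c : ℝ}
    (hF : ∀ x ∈ Ioo a b, HasDerivAt F 0 x) (hlim : Tendsto F (𝓝[>] a) (𝓝 c)) :
    EqOn F (fun _ => c) (Ioo a b) := by
  intro x hx
  have hconst : ∀ y ∈ Ioo a b, F y = F x := fun y hy =>
    isOpen_Ioo.is_const_of_deriv_eq_zero isPreconnected_Ioo
      (fun z hz => (hF z hz).differentiableAt.differentiableWithinAt)
      (fun z hz => (hF z hz).deriv) hy hx
  refine tendsto_nhds_unique (tendsto_const_nhds.congr' ?_) hlim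
  filter_upwards [Ioo_mem_nhdsGT (hx.1.trans hx.2)] with y hy
  exact (hconst y hy).symm

theorem RogersL_add_RogersL_one_sub {x : ℝ} (hx : x ∈ Ioo 0 1) :
    RogersL x + RogersL (1 - x) = π ^ 2 / 6 := by
  refine eqOn_Ioo_of_hasDerivAt_zero (F := fun x => RogersL x + RogersL (1 - x))
    (fun y hy => ?_) ?_ hx
  · have hy' : 1 - y ∈ Ioo 0 1 := ⟨by linarith [hy.2], by linarith [hy.1]⟩
    refine ((hasDerivAt_RogersL hy).add
      ((hasDerivAt_RogersL hy').comp y ((hasDerivAt_id' y).const_sub 1))).congr_deriv ?_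
    rw [sub_sub_cancel]
    ring
  · have hLi2 : ContinuousOn (fun x => Li2 x + Li2 (1 - x)) (Icc 0 1) :=
      (continuousOn_Li2.mono (Icc_subset_Icc (by norm_num) le_rfl)).add <|
        continuousOn_Li2.comp (continuousOn_const.sub (continuousOn_id' _))
          (fun x hx => ⟨by linarith [hx.2], by linarith [hx.1]⟩)
    have hLi2₀ : Tendsto (fun x => Li2 x + Li2 (1 - x)) (𝓝[>] 0) (𝓝 (π ^ 2 / 6)) := by
      have := (hLi2.continuousWithinAt ⟨le_rfl, zero_le_one⟩).mono_of_mem_nhdsWithin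
        (Icc_mem_nhdsGT zero_lt_one)
      simpa [Li2_zero, Li2_one] using this.tendsto
    have h := hLi2₀.add tendsto_log_mul_log_one_sub_nhdsGT_zero
    rw [add_zero] at h
    refine h.congr fun x => ?_
    simp only [RogersL, sub_sub_cancel]
    ring

lemma hasDerivAt_RogersL_sq_sub_two_mul_add_two_mul {x : ℝ} (hx : x ∈ Ioo 0 1) :
    HasDerivAt (fun x => RogersL (x ^ 2) - 2 * RogersL x + 2 * RogersL (x / (1 + x))) 0 x := by
  obtain ⟨hx₀, hx₁⟩ := hx
  have hsq : x ^ 2 ∈ Ioo 0 1 := ⟨by positivity, by nlinarith⟩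
  have hfrac : x / (1 + x) ∈ Ioo 0 1 := ⟨by positivity, by rw [div_lt_one (by linarith)]; linarith⟩
  have hfrac' : HasDerivAt (fun y => y / (1 + y)) (1 / (1 + x) ^ 2) x := by
    refine ((hasDerivAt_id' x).div ((hasDerivAt_id' x).const_add 1) (by linarith)).congr_deriv ?_
    ring
  refine (((hasDerivAt_RogersL hsq).comp (h := fun y : ℝ => y ^ 2) x (hasDerivAt_pow 2 x)).sub
    ((hasDerivAt_RogersL ⟨hx₀, hx₁⟩).const_mul 2) |>.add
    (((hasDerivAt_RogersL hfrac).comp x hfrac').const_mul 2)).congr_deriv ?_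
  have hlog_sq : log (x ^ 2) = 2 * log x := by simp [Real.log_pow]
  have hlog_one_sub_sq : log (1 - x ^ 2) = log (1 - x) + log (1 + x) := by
    rw [← Real.log_mul (by linarith) (by linarith)]
    ring_nf
  have hlog_frac : log (x / (1 + x)) = log x - log (1 + x) := Real.log_div hx₀.ne' (by linarith)
  have hone_sub_frac : 1 - x / (1 + x) = (1 + x)⁻¹ := by field_simp; ring
  rw [hlog_sq, hlog_one_sub_sq, hlog_frac, hone_sub_frac, Real.log_inv]
  have : 1 - x ≠ 0 := by linarith
  have : 1 - x ^ 2 ≠ 0 := by nlinarith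
  field_simp
  ring

theorem RogersL_sq {x : ℝ} (hx : x ∈ Ioo 0 1) :
    RogersL (x ^ 2) = 2 * RogersL x - 2 * RogersL (x / (1 + x)) := by
  have hsq : Tendsto (fun x : ℝ => x ^ 2) (𝓝[>] 0) (𝓝[>] 0) :=
    tendsto_nhdsWithin_iff.2 ⟨((continuous_pow 2).tendsto' 0 0 (by simp)).mono_left
      nhdsWithin_le_nhds, eventually_nhdsWithin_of_forall fun x (hx : 0 < x) => pow_pos hx 2⟩
  have hfrac : Tendsto (fun x : ℝ => x / (1 + x)) (𝓝[>] 0) (𝓝[>] 0) := by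
    refine tendsto_nhdsWithin_iff.2 ⟨?_, eventually_nhdsWithin_of_forall fun x (hx : 0 < x) => ?_⟩
    · have : ContinuousAt (fun x : ℝ => x / (1 + x)) 0 := by fun_prop (disch := norm_num)
      simpa using this.tendsto.mono_left nhdsWithin_le_nhds
    · exact div_pos hx (by linarith)
  have hL := tendsto_RogersL_nhdsGT_zero
  have hlim := ((hL.comp hsq).sub (hL.const_mul 2)).add ((hL.comp hfrac).const_mul 2)
  simp only [mul_zero, sub_zero, add_zero] at hlim
  have hdefect := eqOn_Ioo_of_hasDerivAt_zero
    (fun y hy => hasDerivAt_RogersL_sq_sub_two_mul_add_two_mul hy) hlim hx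
  simp only at hdefect
  linarith

theorem RogersL_sq_of_sq_add_self_eq_one {ρ : ℝ} (hρ : ρ ∈ Ioo 0 1) (h : ρ ^ 2 + ρ = 1) :
    RogersL (ρ ^ 2) = π ^ 2 / 15 := by
  have hreflection := RogersL_add_RogersL_one_sub hρ
  have hduplication := RogersL_sq hρ
  rw [show 1 - ρ = ρ ^ 2 by linarith] at hreflection
  rw [show ρ / (1 + ρ) = ρ ^ 2 by
    rw [div_eq_iff (by linarith [hρ.1])]; linear_combination -ρ * h] at hduplication
  linarith

lemma inv_goldenRatio_mem_Ioo : φ⁻¹ ∈ Ioo 0 1 :=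
  ⟨inv_pos.2 goldenRatio_pos, inv_lt_one_of_one_lt₀ one_lt_goldenRatio⟩

lemma inv_goldenRatio_sq_add_inv_goldenRatio : φ⁻¹ ^ 2 + φ⁻¹ = 1 := by
  rw [inv_goldenRatio]
  linear_combination goldenConj_sq

lemma inv_goldenRatio_sq_mem_Ioo : φ⁻¹ ^ 2 ∈ Ioo 0 1 := by
  rw [← inv_goldenRatio_sq_add_inv_goldenRatio]
  exact ⟨by positivity, lt_add_of_pos_right _ inv_goldenRatio_mem_Ioo.1⟩

lemma eq_inv_goldenRatio_of_sq_add_self_eq_one {y : ℝ} (hy : 0 < y) (h : y ^ 2 + y = 1) :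
    y = φ⁻¹ := by
  have hfactor : (y - φ⁻¹) * (y + φ⁻¹ + 1) = 0 := by
    linear_combination h - inv_goldenRatio_sq_add_inv_goldenRatio
  have hpos : 0 < y + φ⁻¹ + 1 := by linarith [inv_goldenRatio_mem_Ioo.1]
  exact sub_eq_zero.1 ((mul_eq_zero.1 hfactor).resolve_right hpos.ne')

lemma RogersL_inv_goldenRatio_sq : RogersL (φ⁻¹ ^ 2) = π ^ 2 / 15 :=
  RogersL_sq_of_sq_add_self_eq_one inv_goldenRatio_mem_Ioo inv_goldenRatio_sq_add_inv_goldenRatio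

lemma rpow_four_thirds {t : ℝ} (ht : 0 ≤ t) : t ^ ((4 : ℝ) / 3) = (t ^ ((2 : ℝ) / 3)) ^ 2 := by
  rw [← rpow_mul_natCast ht]
  norm_num

lemma rpow_two_thirds_pow_three {t : ℝ} (ht : 0 ≤ t) : (t ^ ((2 : ℝ) / 3)) ^ 3 = t ^ 2 := by
  rw [← rpow_mul_natCast ht]
  norm_num

theorem a2_system_iff {x y : ℝ} (hx : x ∈ Ioo 0 1) (hy : y ∈ Ioo 0 1) :
    (x = (1 - x) ^ ((4 : ℝ) / 3) * (1 - y) ^ ((2 : ℝ) / 3) ∧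
      y = (1 - x) ^ ((2 : ℝ) / 3) * (1 - y) ^ ((4 : ℝ) / 3)) ↔ x = φ⁻¹ ^ 2 ∧ y = φ⁻¹ ^ 2 := by
  have hx' : 0 < 1 - x := sub_pos.2 hx.2
  have hy' : 0 < 1 - y := sub_pos.2 hy.2
  rw [rpow_four_thirds hx'.le, rpow_four_thirds hy'.le]
  constructor
  · rintro ⟨h₁, h₂⟩
    have ha : 0 < (1 - x) ^ ((2 : ℝ) / 3) := rpow_pos_of_pos hx' _
    have hb : 0 < (1 - y) ^ ((2 : ℝ) / 3) := rpow_pos_of_pos hy' _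
    -- with `a = (1 - x)^(2/3)`, `b = (1 - y)^(2/3)`: `x - y = a b (a - b)`, and `a - b` has the
    -- sign of `y - x`
    have hxy : x = y := by
      by_contra hne
      rcases lt_or_gt_of_ne hne with h | h
      · have : (1 - y) ^ ((2 : ℝ) / 3) < (1 - x) ^ ((2 : ℝ) / 3) :=
          rpow_lt_rpow hy'.le (by linarith) (by norm_num)
        nlinarith [mul_pos ha hb]
      · have : (1 - x) ^ ((2 : ℝ) / 3) < (1 - y) ^ ((2 : ℝ) / 3) :=
          rpow_lt_rpow hx'.le (by linarith) (by norm_num)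
        nlinarith [mul_pos ha hb]
    subst hxy
    have hx_eq : x = (1 - x) ^ 2 := by
      rw [← rpow_two_thirds_pow_three hx'.le]
      linear_combination h₁
    have h1x : 1 - x = φ⁻¹ := eq_inv_goldenRatio_of_sq_add_self_eq_one hx' (by linarith)
    have hx_eq' : x = φ⁻¹ ^ 2 := by linarith [inv_goldenRatio_sq_add_inv_goldenRatio]
    exact ⟨hx_eq', hx_eq'⟩
  · rintro ⟨rfl, rfl⟩
    have hone_sub : 1 - φ⁻¹ ^ 2 = φ⁻¹ := by linarith [inv_goldenRatio_sq_add_inv_goldenRatio]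
    have h : ((1 - φ⁻¹ ^ 2) ^ ((2 : ℝ) / 3)) ^ 3 = φ⁻¹ ^ 2 := by
      rw [hone_sub, rpow_two_thirds_pow_three inv_goldenRatio_mem_Ioo.1.le]
    constructor <;> linear_combination -h

theorem stmt10 :
    (∃! f : ℝ × ℝ,
      (0 < f.1 ∧ f.1 < 1 ∧ 0 < f.2 ∧ f.2 < 1) ∧
      f.1 = (1 - f.1) ^ ((4 : ℝ) / 3) * (1 - f.2) ^ ((2 : ℝ) / 3) ∧
      f.2 = (1 - f.1) ^ ((2 : ℝ) / 3) * (1 - f.2) ^ ((4 : ℝ) / 3)) ∧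
    ∀ f : ℝ × ℝ,
      (0 < f.1 ∧ f.1 < 1 ∧ 0 < f.2 ∧ f.2 < 1) →
      f.1 = (1 - f.1) ^ ((4 : ℝ) / 3) * (1 - f.2) ^ ((2 : ℝ) / 3) →
      f.2 = (1 - f.1) ^ ((2 : ℝ) / 3) * (1 - f.2) ^ ((4 : ℝ) / 3) →
      6 / Real.pi ^ 2 * (RogersL f.1 + RogersL f.2) = 4 / 5 := by
  have hρ := inv_goldenRatio_sq_mem_Ioo
  constructor
  · refine ⟨(φ⁻¹ ^ 2, φ⁻¹ ^ 2), ⟨⟨hρ.1, hρ.2, hρ.1, hρ.2⟩, (a2_system_iff hρ hρ).2 ⟨rfl, rfl⟩⟩, ?_⟩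
    rintro ⟨x, y⟩ ⟨⟨hx₀, hx₁, hy₀, hy₁⟩, hsystem⟩
    obtain ⟨rfl, rfl⟩ := (a2_system_iff ⟨hx₀, hx₁⟩ ⟨hy₀, hy₁⟩).1 hsystem
    rfl
  · rintro ⟨x, y⟩ ⟨hx₀, hx₁, hy₀, hy₁⟩ h₁ h₂
    obtain ⟨rfl, rfl⟩ := (a2_system_iff ⟨hx₀, hx₁⟩ ⟨hy₀, hy₁⟩).1 ⟨h₁, h₂⟩
    rw [RogersL_inv_goldenRatio_sq]
    field_simp
    ring
end

section
/- The Rogers–Ramanujan identity holds: Σ_{n=0}^∞ q^{n²}/((1−q)(1−q²)⋯(1−qⁿ)) = ∏_{n≥1, n≡±1 mod 5} 1/(1−qⁿ), as an identity of formal power series in ℤ[[q]]. -/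
/-!
Schur's proof, carried out in a commutative ring in which `x ^ K = 0`; the theorem is the case
`ℤ⟦X⟧ ⧸ (X ^ (N + 1))`, `K = N + 1`.

The polynomials `D_M = ∑ₙ x^(n²) [M - n, n]` and `E_M = ∑ⱼ (-1)ʲ x^(j(5j+1)/2) [M, ⌊(M - 5j)/2⌋]`
satisfy the same recurrence `f (M + 2) = f (M + 1) + x^(M+1) f M` with `f 0 = f 1 = 1`, hence agree.
For `M = 5K`, `D_{5K}` is the truncated sum side, and every binomial of `E_{5K}` whose power of `x`
survives equals `1 / (x)_K`, so `E_{5K} = θ / (x)_K` with `θ = ∑ⱼ (-1)ʲ x^(j(5j+1)/2)`. The same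
evaluation in the finite Jacobi triple product
`∑ⱼ (-1)ʲ x^(j(5j+1)/2) [2K, K + j]_{x⁵} = ∏_{i<K} (1 - x^(5i+2)) (1 - x^(5i+3))`
gives `θ = (x⁵; x⁵)_K ∏_{i<K} (1 - x^(5i+2)) (1 - x^(5i+3))`, the product of the `1 - x^m` with
`m ≢ ±1 (mod 5)`, and dividing by `(x)_K` leaves the product side.
-/

open PowerSeries Finset

/-- The q-Pochhammer symbol `(q)_n = ∏_{i=1}^n (1 − qⁱ)` in `ℤ[[q]]`. -/
noncomputable def qPoch (n : ℕ) : PowerSeries ℤ :=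
  ∏ i ∈ Finset.range n, (1 - (PowerSeries.X : PowerSeries ℤ) ^ (i + 1))

open scoped Ring

namespace RogersRamanujan

noncomputable section

section GaussianBinomial

variable {A : Type*} [CommRing A] {x : A}

def qPochhammer (x : A) (n : ℕ) : A := ∏ i ∈ range n, (1 - x ^ (i + 1))

theorem qPochhammer_succ (x : A) (n : ℕ) :
    qPochhammer x (n + 1) = qPochhammer x n * (1 - x ^ (n + 1)) :=
  prod_range_succ _ _

theorem isUnit_qPochhammer (hx : ∀ i, IsUnit (1 - x ^ (i + 1))) (n : ℕ) :
    IsUnit (qPochhammer x n) :=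
  IsUnit.prod_iff.mpr fun i _ => hx i

/-- The lower index is an integer, so that Pascal's rules below hold without side conditions. -/
def gaussBinom (x : A) (n : ℕ) (k : ℤ) : A :=
  if 0 ≤ k ∧ k ≤ n then
    qPochhammer x n * (qPochhammer x k.toNat)⁻¹ʳ * (qPochhammer x (n - k.toNat))⁻¹ʳ
  else 0

theorem gaussBinom_natCast {n k : ℕ} (hk : k ≤ n) :
    gaussBinom x n k =
      qPochhammer x n * (qPochhammer x k)⁻¹ʳ * (qPochhammer x (n - k))⁻¹ʳ := by
  simp [gaussBinom, hk]

theorem gaussBinom_eq_zero {n : ℕ} {k : ℤ} (hk : k < 0 ∨ n < k) : gaussBinom x n k = 0 :=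
  if_neg (by omega)

theorem gaussBinom_symm (n : ℕ) (k : ℤ) : gaussBinom x n (n - k) = gaussBinom x n k := by
  unfold gaussBinom
  by_cases hk : 0 ≤ k ∧ k ≤ n
  · rw [if_pos (by omega), if_pos hk, show (n - k).toNat = n - k.toNat by omega,
      show n - (n - k.toNat) = k.toNat by omega, mul_right_comm]
  · rw [if_neg (by omega), if_neg hk]

theorem gaussBinom_mul_qPochhammer (hx : ∀ i, IsUnit (1 - x ^ (i + 1))) {n k : ℕ}
    (hk : k ≤ n) :
    gaussBinom x n k * (qPochhammer x k * qPochhammer x (n - k)) = qPochhammer x n := by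
  have h1 := Ring.inverse_mul_cancel _ (isUnit_qPochhammer hx k)
  have h2 := Ring.inverse_mul_cancel _ (isUnit_qPochhammer hx (n - k))
  rw [gaussBinom_natCast hk]
  linear_combination
    (qPochhammer x n * (qPochhammer x (n - k))⁻¹ʳ * qPochhammer x (n - k)) * h1 +
      qPochhammer x n * h2

theorem gaussBinom_eq_of_mul_eq (hx : ∀ i, IsUnit (1 - x ^ (i + 1))) {n k : ℕ} (hk : k ≤ n)
    {c : A} (h : c * (qPochhammer x k * qPochhammer x (n - k)) = qPochhammer x n) :
    gaussBinom x n k = c :=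
  (isUnit_qPochhammer hx k |>.mul (isUnit_qPochhammer hx _)).mul_right_cancel
    (by rw [gaussBinom_mul_qPochhammer hx hk, h])

theorem gaussBinom_zero_right (hx : ∀ i, IsUnit (1 - x ^ (i + 1))) (n : ℕ) :
    gaussBinom x n 0 = 1 :=
  gaussBinom_eq_of_mul_eq (k := 0) hx n.zero_le (by simp [qPochhammer])

theorem gaussBinom_self (hx : ∀ i, IsUnit (1 - x ^ (i + 1))) (n : ℕ) :
    gaussBinom x n n = 1 := by
  rw [← gaussBinom_symm, sub_self, gaussBinom_zero_right hx]

theorem mul_gaussBinom_congr {a b : A} {n : ℕ} {k : ℤ} (h : 0 ≤ k → k ≤ n → a = b) :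
    a * gaussBinom x n k = b * gaussBinom x n k := by
  by_cases hk : 0 ≤ k ∧ k ≤ n
  · rw [h hk.1 hk.2]
  · rw [gaussBinom_eq_zero (by omega), mul_zero, mul_zero]

theorem gaussBinom_succ_succ (hx : ∀ i, IsUnit (1 - x ^ (i + 1))) (n : ℕ) (k : ℤ) :
    gaussBinom x (n + 1) (k + 1) =
      gaussBinom x n (k + 1) + x ^ (n - k).toNat * gaussBinom x n k := by
  rcases lt_trichotomy k (-1) with hk | rfl | hk
  · simp only [gaussBinom_eq_zero (x := x) (Or.inl (show k + 1 < 0 by omega)),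
      gaussBinom_eq_zero (x := x) (Or.inl (show k < 0 by omega)), mul_zero, add_zero]
  · simp [gaussBinom_zero_right hx, gaussBinom_eq_zero (Or.inl (show (-1 : ℤ) < 0 by omega))]
  lift k to ℕ using (by omega)
  rcases lt_trichotomy k n with hkn | rfl | hkn
  · obtain ⟨m, rfl⟩ : ∃ m, n = k + m + 1 := ⟨n - k - 1, by omega⟩
    have h1 := gaussBinom_mul_qPochhammer hx (show k + 1 ≤ k + m + 1 by omega)
    have h2 := gaussBinom_mul_qPochhammer hx (show k ≤ k + m + 1 by omega)
    rw [show k + m + 1 - (k + 1) = m by omega, qPochhammer_succ] at h1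
    rw [show k + m + 1 - k = m + 1 by omega, qPochhammer_succ x m] at h2
    rw [show ((k + m + 1 : ℕ) - k : ℤ).toNat = m + 1 by omega]
    push_cast at h1
    refine gaussBinom_eq_of_mul_eq (k := k + 1) hx (by omega) ?_
    rw [show k + m + 1 + 1 - (k + 1) = m + 1 by omega, qPochhammer_succ x k,
      qPochhammer_succ x m, qPochhammer_succ x (k + m + 1)]
    linear_combination (1 - x ^ (m + 1)) * h1 + x ^ (m + 1) * (1 - x ^ (k + 1)) * h2
  · rw [show (k : ℤ) + 1 = (k + 1 : ℕ) by push_cast; ring, gaussBinom_self hx,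
      gaussBinom_self hx, gaussBinom_eq_zero (Or.inr (by omega))]
    simp
  · rw [gaussBinom_eq_zero (Or.inr (by omega)), gaussBinom_eq_zero (Or.inr (by omega)),
      gaussBinom_eq_zero (Or.inr (by omega))]
    simp

theorem gaussBinom_succ_succ' (hx : ∀ i, IsUnit (1 - x ^ (i + 1))) (n : ℕ) (k : ℤ) :
    gaussBinom x (n + 1) (k + 1) =
      x ^ (k + 1).toNat * gaussBinom x n (k + 1) + gaussBinom x n k := by
  rw [← gaussBinom_symm, ← gaussBinom_symm n (k + 1), ← gaussBinom_symm n k,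
    show ((n + 1 : ℕ) : ℤ) - (k + 1) = n - (k + 1) + 1 by push_cast; ring,
    gaussBinom_succ_succ hx, show (n : ℤ) - (k + 1) + 1 = n - k by ring,
    show ((n : ℤ) - (n - (k + 1))).toNat = (k + 1).toNat by omega, add_comm]

end GaussianBinomial

theorem sum_Icc_comp_sub_one {M : Type*} [AddCommMonoid M] {f : ℤ → M} {a b : ℤ}
    (ha : f (a - 1) = 0) (hb : f b = 0) : ∑ j ∈ Icc a b, f (j - 1) = ∑ j ∈ Icc a b, f j :=
  calc ∑ j ∈ Icc a b, f (j - 1) = ∑ j ∈ Icc (a - 1) (b - 1), f j :=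
        sum_nbij' (· - 1) (· + 1) (by simp) (by simp) (by simp) (by simp) (by simp)
    _ = ∑ j ∈ Icc (a - 1) b, f j :=
        sum_subset (Icc_subset_Icc le_rfl (by omega)) fun j hj hj' => by
          obtain rfl : j = b := by simp only [mem_Icc] at hj hj'; omega
          exact hb
    _ = ∑ j ∈ Icc a b, f j :=
        (sum_subset (Icc_subset_Icc (by omega) le_rfl) fun j hj hj' => by
          obtain rfl : j = a - 1 := by simp only [mem_Icc] at hj hj'; omega
          exact ha).symm

def rrExponent (j : ℤ) : ℕ := (j * (5 * j + 1) / 2).toNat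

theorem two_mul_rrExponent (j : ℤ) : 2 * (rrExponent j : ℤ) = j * (5 * j + 1) := by
  have h2 : (2 : ℤ) ∣ j * (5 * j + 1) := by
    rw [show j * (5 * j + 1) = 2 * (2 * j * j) + j * (j + 1) by ring]
    exact dvd_add (dvd_mul_right 2 _) (Int.even_mul_succ_self j).two_dvd
  have h0 : 0 ≤ j * (5 * j + 1) := by
    rcases le_or_gt 0 j with h | h <;> nlinarith
  rw [rrExponent, Int.toNat_of_nonneg (by omega)]
  omega

theorem rrExponent_add_one (j : ℤ) : (rrExponent (j + 1) : ℤ) = rrExponent j + 5 * j + 3 := by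
  have := two_mul_rrExponent j
  have := two_mul_rrExponent (j + 1)
  linarith

theorem abs_five_mul_le_of_rrExponent_lt {j : ℤ} {K : ℕ} (h : rrExponent j < K) :
    |5 * j| ≤ 2 * K := by
  have := two_mul_rrExponent j
  rw [abs_le]
  constructor <;> nlinarith

section Jacobi

variable {A : Type*} [CommRing A] {x : A}

theorem isUnit_one_sub_pow_five_pow (hx : ∀ i, IsUnit (1 - x ^ (i + 1))) (i : ℕ) :
    IsUnit (1 - (x ^ 5) ^ (i + 1)) := by
  rw [← pow_mul, show 5 * (i + 1) = 5 * i + 4 + 1 by ring]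
  exact hx _

def jacobiTerm (x : A) (m : ℕ) (c j : ℤ) : A :=
  (j.negOnePow : A) * x ^ rrExponent j * gaussBinom (x ^ 5) m (c + j)

theorem cast_negOnePow_sub_one (j : ℤ) : ((j - 1).negOnePow : A) = -(j.negOnePow : A) := by
  simp [Int.negOnePow_sub]

theorem sum_jacobiTerm_odd (hx : ∀ i, IsUnit (1 - x ^ (i + 1))) {n : ℕ} {L : ℤ}
    (hL : n + 1 ≤ L) :
    ∑ j ∈ Icc (-L) L, jacobiTerm x (2 * n + 1) (n + 1) j =
      (1 - x ^ (5 * n + 2)) * ∑ j ∈ Icc (-L) L, jacobiTerm x (2 * n) n j := by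
  set g : ℤ → A := fun j => (j.negOnePow : A) *
    (x ^ rrExponent j * (x ^ 5) ^ (n + j + 1).toNat) * gaussBinom (x ^ 5) (2 * n) (n + j + 1)
  have hsplit (j : ℤ) : jacobiTerm x (2 * n + 1) (n + 1) j = jacobiTerm x (2 * n) n j + g j := by
    rw [jacobiTerm, jacobiTerm, add_assoc, add_comm 1 j, ← add_assoc,
      gaussBinom_succ_succ' (isUnit_one_sub_pow_five_pow hx)]
    ring
  have hshift (j : ℤ) : g (j - 1) = -(x ^ (5 * n + 2) * jacobiTerm x (2 * n) n j) := by
    have hexp : x ^ rrExponent (j - 1) * (x ^ 5) ^ (n + j).toNat *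
          gaussBinom (x ^ 5) (2 * n) (n + j) =
        x ^ (5 * n + 2) * x ^ rrExponent j * gaussBinom (x ^ 5) (2 * n) (n + j) := by
      refine mul_gaussBinom_congr fun h _ => ?_
      have := rrExponent_add_one (j - 1)
      rw [sub_add_cancel] at this
      rw [← pow_mul, ← pow_add, ← pow_add]
      congr 1
      omega
    simp only [g, jacobiTerm, cast_negOnePow_sub_one, show (n : ℤ) + (j - 1) + 1 = n + j by ring]
    linear_combination (-(j.negOnePow : A)) * hexp
  have hvanish {j : ℤ} (hj : j + 1 < -n ∨ n ≤ j) : g j = 0 := by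
    simp only [g]
    rw [gaussBinom_eq_zero (by omega), mul_zero]
  calc ∑ j ∈ Icc (-L) L, jacobiTerm x (2 * n + 1) (n + 1) j
      = ∑ j ∈ Icc (-L) L, jacobiTerm x (2 * n) n j + ∑ j ∈ Icc (-L) L, g (j - 1) := by
        rw [sum_Icc_comp_sub_one (hvanish (by omega)) (hvanish (by omega)), ← sum_add_distrib]
        exact sum_congr rfl fun j _ => hsplit j
    _ = _ := by simp only [hshift, sum_neg_distrib, ← mul_sum]; ring

theorem sum_jacobiTerm_even (hx : ∀ i, IsUnit (1 - x ^ (i + 1))) {n : ℕ} {L : ℤ}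
    (hL : n + 1 ≤ L) :
    ∑ j ∈ Icc (-L) L, jacobiTerm x (2 * n + 2) (n + 1) j =
      (1 - x ^ (5 * n + 3)) * ∑ j ∈ Icc (-L) L, jacobiTerm x (2 * n + 1) (n + 1) j := by
  set g : ℤ → A := fun j => (j.negOnePow : A) *
    (x ^ rrExponent j * (x ^ 5) ^ ((2 * n + 1 : ℕ) - (n + j)).toNat) *
    gaussBinom (x ^ 5) (2 * n + 1) (n + j)
  have hsplit (j : ℤ) :
      jacobiTerm x (2 * n + 2) (n + 1) j = jacobiTerm x (2 * n + 1) (n + 1) j + g j := by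
    rw [jacobiTerm, jacobiTerm, show (n : ℤ) + 1 + j = n + j + 1 by ring,
      gaussBinom_succ_succ (isUnit_one_sub_pow_five_pow hx)]
    ring
  have hshift (j : ℤ) : g j = -(x ^ (5 * n + 3) * jacobiTerm x (2 * n + 1) (n + 1) (j - 1)) := by
    have hexp : x ^ rrExponent j * (x ^ 5) ^ ((2 * n + 1 : ℕ) - (n + j)).toNat *
          gaussBinom (x ^ 5) (2 * n + 1) (n + j) =
        x ^ (5 * n + 3) * x ^ rrExponent (j - 1) * gaussBinom (x ^ 5) (2 * n + 1) (n + j) := by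
      refine mul_gaussBinom_congr fun _ h => ?_
      have := rrExponent_add_one (j - 1)
      rw [sub_add_cancel] at this
      rw [← pow_mul, ← pow_add, ← pow_add]
      congr 1
      omega
    simp only [g, jacobiTerm, cast_negOnePow_sub_one, show (n : ℤ) + 1 + (j - 1) = n + j by ring]
    linear_combination (j.negOnePow : A) * hexp
  have hvanish {j : ℤ} (hj : j < -n - 1 ∨ n < j) : jacobiTerm x (2 * n + 1) (n + 1) j = 0 := by
    rw [jacobiTerm, gaussBinom_eq_zero (by omega), mul_zero]
  calc ∑ j ∈ Icc (-L) L, jacobiTerm x (2 * n + 2) (n + 1) j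
      = ∑ j ∈ Icc (-L) L, jacobiTerm x (2 * n + 1) (n + 1) j + ∑ j ∈ Icc (-L) L, g j := by
        rw [← sum_add_distrib]
        exact sum_congr rfl fun j _ => hsplit j
    _ = _ := by
        simp only [hshift, sum_neg_distrib, ← mul_sum]
        rw [sum_Icc_comp_sub_one (hvanish (by omega)) (hvanish (by omega))]
        ring

theorem sum_jacobiTerm (hx : ∀ i, IsUnit (1 - x ^ (i + 1))) (n : ℕ) {L : ℤ}
    (hL : n + 1 ≤ L) :
    ∑ j ∈ Icc (-L) L, jacobiTerm x (2 * n) n j =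
      ∏ i ∈ range n, ((1 - x ^ (5 * i + 2)) * (1 - x ^ (5 * i + 3))) := by
  induction n with
  | zero =>
    rw [prod_range_zero, sum_eq_single_of_mem 0 (by simp; omega)]
    · simp [jacobiTerm, rrExponent, gaussBinom_zero_right (isUnit_one_sub_pow_five_pow hx)]
    · intro j _ hj
      rw [jacobiTerm, gaussBinom_eq_zero (by omega), mul_zero]
  | succ n ih =>
    push_cast at hL ⊢
    rw [show 2 * (n + 1) = 2 * n + 2 by ring, sum_jacobiTerm_even hx (by omega),
      sum_jacobiTerm_odd hx (by omega), ih (by omega), prod_range_succ]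
    ring

end Jacobi

section Schur

variable {A : Type*} [CommRing A] {x : A}

def schurD (x : A) (M : ℕ) : A := ∑ n ∈ range (M + 1), x ^ (n ^ 2) * gaussBinom x (M - n) n

def schurTerm (x : A) (M : ℕ) (j : ℤ) : A :=
  (j.negOnePow : A) * x ^ rrExponent j * gaussBinom x M ((M - 5 * j) / 2)

theorem schurD_eq_sum_range {M L : ℕ} (hL : M + 1 ≤ L) :
    schurD x M = ∑ n ∈ range L, x ^ (n ^ 2) * gaussBinom x (M - n) n :=
  sum_subset (range_subset_range.mpr hL) fun n _ hn => by
    rw [gaussBinom_eq_zero (Or.inr (by simp at hn; omega)), mul_zero]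

theorem schurD_add_two (hx : ∀ i, IsUnit (1 - x ^ (i + 1))) (M : ℕ) :
    schurD x (M + 2) = schurD x (M + 1) + x ^ (M + 1) * schurD x M := by
  have hterm (n : ℕ) : x ^ ((n + 1) ^ 2) * gaussBinom x (M + 1 - n) (n + 1) =
      x ^ ((n + 1) ^ 2) * gaussBinom x (M - n) (n + 1) +
        x ^ (M + 1) * (x ^ (n ^ 2) * gaussBinom x (M - n) n) := by
    rcases le_or_gt n M with hn | hn
    · rw [show M + 1 - n = M - n + 1 by omega, gaussBinom_succ_succ hx, mul_add, ← mul_assoc,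
        ← mul_assoc]
      congr 1
      refine mul_gaussBinom_congr fun _ h => ?_
      rw [← pow_add, ← pow_add, show (n + 1) ^ 2 = n ^ 2 + 2 * n + 1 by ring]
      congr 1
      omega
    · rw [show M + 1 - n = 0 by omega, show M - n = 0 by omega,
        gaussBinom_eq_zero (x := x) (Or.inr (show ((0 : ℕ) : ℤ) < n + 1 by omega)),
        gaussBinom_eq_zero (x := x) (Or.inr (show ((0 : ℕ) : ℤ) < n by omega))]
      ring
  rw [schurD, schurD_eq_sum_range (L := M + 3) (M := M + 1) (by omega),
    schurD_eq_sum_range (L := M + 2) (M := M) (by omega), sum_range_succ' _ (M + 2),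
    sum_range_succ' _ (M + 2)]
  push_cast
  simp only [hterm, sum_add_distrib, mul_sum, gaussBinom_zero_right hx]
  ring

theorem schurTerm_eq_zero {M : ℕ} {j : ℤ} (hj : M < 5 * j ∨ 5 * j + M + 2 ≤ 0) :
    schurTerm x M j = 0 := by
  rw [schurTerm, gaussBinom_eq_zero (by omega), mul_zero]

def schurDefect (x : A) (M : ℕ) (j : ℤ) : A :=
  schurTerm x (M + 2) j - schurTerm x (M + 1) j - x ^ (M + 1) * schurTerm x M j

theorem schurDefect_of_odd (hx : ∀ i, IsUnit (1 - x ^ (i + 1))) {M : ℕ} {j k : ℤ}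
    (hk : M - 5 * j = 2 * k + 3) :
    schurDefect x M j =
      (j.negOnePow : A) * (x ^ rrExponent j * x ^ (M - k).toNat) * gaussBinom x M k := by
  have hpascal : gaussBinom x (M + 2) (k + 2) = gaussBinom x (M + 1) (k + 2) +
      x ^ (M - k).toNat * (x ^ (k + 1).toNat * gaussBinom x M (k + 1) + gaussBinom x M k) := by
    rw [show k + 2 = k + 1 + 1 by ring, gaussBinom_succ_succ hx (M + 1) (k + 1),
      gaussBinom_succ_succ' hx M k]
    push_cast
    rw [show (M : ℤ) + 1 - (k + 1) = M - k by ring]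
  have hexp : x ^ (M - k).toNat * x ^ (k + 1).toNat * gaussBinom x M (k + 1) =
      x ^ (M + 1) * gaussBinom x M (k + 1) :=
    mul_gaussBinom_congr fun _ _ => by rw [← pow_add]; congr 1; omega
  simp only [schurDefect, schurTerm]
  push_cast
  rw [show ((M : ℤ) + 2 - 5 * j) / 2 = k + 2 by omega,
    show ((M : ℤ) + 1 - 5 * j) / 2 = k + 2 by omega,
    show ((M : ℤ) - 5 * j) / 2 = k + 1 by omega, hpascal]
  linear_combination (j.negOnePow : A) * x ^ rrExponent j * hexp

theorem schurDefect_of_even (hx : ∀ i, IsUnit (1 - x ^ (i + 1))) {M : ℕ} {j k : ℤ}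
    (hk : M - 5 * j = 2 * k - 2) :
    schurDefect x M j =
      (j.negOnePow : A) * (x ^ rrExponent j * x ^ k.toNat) * gaussBinom x M k := by
  have hpascal : gaussBinom x (M + 2) k = x ^ k.toNat *
      (gaussBinom x M k + x ^ (M - (k - 1)).toNat * gaussBinom x M (k - 1)) +
        gaussBinom x (M + 1) (k - 1) := by
    rw [show k = k - 1 + 1 by ring, gaussBinom_succ_succ' hx, gaussBinom_succ_succ hx]
    simp only [sub_add_cancel]
  have hexp : x ^ k.toNat * x ^ (M - (k - 1)).toNat * gaussBinom x M (k - 1) =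
      x ^ (M + 1) * gaussBinom x M (k - 1) :=
    mul_gaussBinom_congr fun _ _ => by rw [← pow_add]; congr 1; omega
  simp only [schurDefect, schurTerm]
  push_cast
  rw [show ((M : ℤ) + 2 - 5 * j) / 2 = k by omega,
    show ((M : ℤ) + 1 - 5 * j) / 2 = k - 1 by omega,
    show ((M : ℤ) - 5 * j) / 2 = k - 1 by omega, hpascal]
  linear_combination (j.negOnePow : A) * x ^ rrExponent j * hexp

theorem schurDefect_add_schurDefect_add_one (hx : ∀ i, IsUnit (1 - x ^ (i + 1))) {M : ℕ}
    {j : ℤ} (hodd : (M - 5 * j) % 2 = 1) : schurDefect x M j + schurDefect x M (j + 1) = 0 := by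
  obtain ⟨k, hk⟩ : ∃ k : ℤ, M - 5 * j = 2 * k + 3 := ⟨(M - 5 * j - 3) / 2, by omega⟩
  have hexp : x ^ rrExponent j * x ^ (M - k).toNat * gaussBinom x M k =
      x ^ rrExponent (j + 1) * x ^ k.toNat * gaussBinom x M k :=
    mul_gaussBinom_congr fun _ _ => by
      have := rrExponent_add_one j
      rw [← pow_add, ← pow_add]
      congr 1
      omega
  rw [schurDefect_of_odd hx hk, schurDefect_of_even hx (k := k) (by omega), Int.negOnePow_succ]
  push_cast
  linear_combination (j.negOnePow : A) * hexp

theorem sum_schurDefect (hx : ∀ i, IsUnit (1 - x ^ (i + 1))) {M : ℕ} {L : ℤ}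
    (hL : M + 2 ≤ L) :
    ∑ j ∈ Icc (-L) L, schurDefect x M j = 0 := by
  -- The defects at `j` and `j + 1` cancel when `M - 5 j` is odd, so the sum telescopes.
  set g : ℤ → A := fun j => if (M - 5 * j) % 2 = 1 then schurDefect x M j else 0
  have htelescope (j : ℤ) : schurDefect x M j = g j - g (j - 1) := by
    simp only [g]
    split_ifs with h₁ h₂ h₂
    · omega
    · rw [sub_zero]
    · have := schurDefect_add_schurDefect_add_one hx h₂
      rw [sub_add_cancel] at this
      linear_combination this
    · omega
  have hvanish {j : ℤ} (hj : M + 2 < 5 * j ∨ 5 * j + M + 4 ≤ 0) : g j = 0 := by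
    simp only [g, schurDefect]
    rw [schurTerm_eq_zero (by push_cast; omega), schurTerm_eq_zero (by push_cast; omega),
      schurTerm_eq_zero (by omega)]
    simp
  rw [sum_congr rfl fun j _ => htelescope j, sum_sub_distrib,
    sum_Icc_comp_sub_one (hvanish (by omega)) (hvanish (by omega)), sub_self]

theorem sum_schurTerm_of_le_one (hx : ∀ i, IsUnit (1 - x ^ (i + 1))) {M : ℕ} (hM : M ≤ 1)
    {L : ℤ} (hL : 0 ≤ L) : ∑ j ∈ Icc (-L) L, schurTerm x M j = 1 := by
  rw [sum_eq_single_of_mem 0 (by simp; omega) fun j _ hj => schurTerm_eq_zero (by omega)]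
  simp [schurTerm, rrExponent, show (M : ℤ) / 2 = 0 by omega, gaussBinom_zero_right hx]

theorem schurD_eq_sum_schurTerm (hx : ∀ i, IsUnit (1 - x ^ (i + 1))) (M : ℕ) {L : ℤ}
    (hL : M ≤ L) :
    schurD x M = ∑ j ∈ Icc (-L) L, schurTerm x M j := by
  induction M using Nat.twoStepInduction with
  | zero =>
    rw [sum_schurTerm_of_le_one hx zero_le_one (by omega)]
    simp [schurD, gaussBinom_zero_right hx]
  | one =>
    rw [sum_schurTerm_of_le_one hx le_rfl (by omega), schurD]
    simp [sum_range_succ, gaussBinom_zero_right hx, gaussBinom_eq_zero (x := x) (n := 0) (k := 1)]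
  | more M ih₀ ih₁ =>
    have hsum := sum_schurDefect hx (x := x) (M := M) (L := L) (by push_cast at hL; omega)
    simp only [schurDefect, sum_sub_distrib, ← mul_sum] at hsum
    push_cast at hL ih₁
    rw [schurD_add_two hx, ih₀ (by omega), ih₁ (by omega)]
    linear_combination -hsum

end Schur

section Nilpotent

variable {A : Type*} [CommRing A] {x : A} {K : ℕ}

theorem isUnit_one_sub_pow_of_pow_eq_zero (hx : x ^ K = 0) (i : ℕ) : IsUnit (1 - x ^ (i + 1)) :=
  (IsNilpotent.pow_succ i ⟨K, hx⟩).isUnit_one_sub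

theorem qPochhammer_eq_of_pow_eq_zero (hx : x ^ K = 0) {n : ℕ} (hn : K ≤ n) :
    qPochhammer x n = qPochhammer x K := by
  induction n, hn using Nat.le_induction with
  | base => rfl
  | succ n hn ih => rw [qPochhammer_succ, ih, pow_eq_zero_of_le (by omega) hx, sub_zero, mul_one]

theorem gaussBinom_eq_inverse_of_pow_eq_zero (hx : x ^ K = 0) {n : ℕ} {k : ℤ} (hk : K ≤ k)
    (hkn : k + K ≤ n) : gaussBinom x n k = (qPochhammer x K)⁻¹ʳ := by
  lift k to ℕ using (by omega)
  rw [gaussBinom_natCast (by omega), qPochhammer_eq_of_pow_eq_zero hx (n := n) (by omega),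
    qPochhammer_eq_of_pow_eq_zero hx (n := k) (by omega),
    qPochhammer_eq_of_pow_eq_zero hx (n := n - k) (by omega),
    Ring.mul_inverse_cancel _ (isUnit_qPochhammer (isUnit_one_sub_pow_of_pow_eq_zero hx) K),
    one_mul]

theorem sum_negOnePow_mul_pow_rrExponent_mul (hx : x ^ K = 0) (s : Finset ℤ) {b : ℤ → A}
    {c : A} (hb : ∀ j, rrExponent j < K → b j = c) :
    ∑ j ∈ s, (j.negOnePow : A) * x ^ rrExponent j * b j =
      (∑ j ∈ s, (j.negOnePow : A) * x ^ rrExponent j) * c := by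
  rw [sum_mul]
  refine sum_congr rfl fun j _ => ?_
  rcases lt_or_ge (rrExponent j) K with hj | hj
  · rw [hb j hj]
  · rw [pow_eq_zero_of_le hj hx]
    ring

theorem schurD_eq_of_pow_eq_zero (hx : x ^ K = 0) :
    schurD x (5 * K) = ∑ n ∈ range K, x ^ (n ^ 2) * (qPochhammer x n)⁻¹ʳ := by
  have hP {m : ℕ} (hm : K ≤ m) := qPochhammer_eq_of_pow_eq_zero hx hm
  rw [schurD, ← sum_subset (range_subset_range.mpr (show K ≤ 5 * K + 1 by omega))
    fun n _ hn => by rw [pow_eq_zero_of_le (by simp at hn; nlinarith) hx, zero_mul]]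
  refine sum_congr rfl fun n hn => ?_
  rw [mem_range] at hn
  rw [gaussBinom_natCast (by omega), hP (m := 5 * K - n) (by omega),
    hP (m := 5 * K - n - n) (by omega), mul_right_comm _ (qPochhammer x n)⁻¹ʳ,
    Ring.mul_inverse_cancel _ (isUnit_qPochhammer (isUnit_one_sub_pow_of_pow_eq_zero hx) K),
    one_mul]

theorem sum_schurTerm_eq_of_pow_eq_zero (hx : x ^ K = 0) (L : ℤ) :
    ∑ j ∈ Icc (-L) L, schurTerm x (5 * K) j =
      (∑ j ∈ Icc (-L) L, (j.negOnePow : A) * x ^ rrExponent j) * (qPochhammer x K)⁻¹ʳ :=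
  sum_negOnePow_mul_pow_rrExponent_mul hx _ fun j hj => by
    have := abs_le.mp (abs_five_mul_le_of_rrExponent_lt hj)
    exact gaussBinom_eq_inverse_of_pow_eq_zero hx (by push_cast; omega) (by push_cast; omega)

theorem sum_jacobiTerm_eq_of_pow_eq_zero (hx : x ^ K = 0) (L : ℤ) :
    ∑ j ∈ Icc (-L) L, jacobiTerm x (2 * K) K j =
      (∑ j ∈ Icc (-L) L, (j.negOnePow : A) * x ^ rrExponent j) *
        (qPochhammer (x ^ 5) K)⁻¹ʳ := by
  have hx5 : (x ^ 5) ^ ((K + 4) / 5) = 0 := by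
    rw [← pow_mul]
    exact pow_eq_zero_of_le (by omega) hx
  rw [qPochhammer_eq_of_pow_eq_zero hx5 (by omega)]
  refine sum_negOnePow_mul_pow_rrExponent_mul hx _ fun j hj => ?_
  have := abs_le.mp (abs_five_mul_le_of_rrExponent_lt hj)
  exact gaussBinom_eq_inverse_of_pow_eq_zero hx5 (by omega) (by push_cast; omega)

def rrFactor (x : A) (m : ℕ) : A :=
  if (m + 1) % 5 = 1 ∨ (m + 1) % 5 = 4 then (1 - x ^ (m + 1))⁻¹ʳ else 1

theorem prod_rrFactor_mul_qPochhammer (hx : ∀ i, IsUnit (1 - x ^ (i + 1))) (K : ℕ) :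
    (∏ m ∈ range (5 * K), rrFactor x m) * qPochhammer x (5 * K) =
    qPochhammer (x ^ 5) K * ∏ i ∈ range K, ((1 - x ^ (5 * i + 2)) * (1 - x ^ (5 * i + 3))) := by
  have hcancel (m : ℕ) : rrFactor x m * (1 - x ^ (m + 1)) =
      if (m + 1) % 5 = 1 ∨ (m + 1) % 5 = 4 then 1 else 1 - x ^ (m + 1) := by
    rw [rrFactor]
    split_ifs
    · exact Ring.inverse_mul_cancel _ (hx m)
    · exact one_mul _
  rw [qPochhammer, ← prod_mul_distrib]
  simp only [hcancel]
  induction K with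
  | zero => simp [qPochhammer]
  | succ K ih =>
    rw [show 5 * (K + 1) = 5 * K + 4 + 1 by ring]
    simp only [prod_range_succ, ih, qPochhammer_succ, ← pow_mul]
    norm_num [Nat.add_mod]
    ring_nf

theorem prod_rrFactor_eq_of_pow_eq_zero (hx : x ^ K = 0) {n : ℕ} (hn : K ≤ n) :
    ∏ m ∈ range n, rrFactor x m = ∏ m ∈ range K, rrFactor x m :=
  (prod_subset (range_subset_range.mpr hn) fun m _ hm => by
    rw [rrFactor, pow_eq_zero_of_le (by simp at hm; omega) hx, sub_zero, Ring.inverse_one,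
      ite_self]).symm

theorem rogersRamanujan_of_pow_eq_zero (hx : x ^ K = 0) :
    ∑ n ∈ range K, x ^ (n ^ 2) * (qPochhammer x n)⁻¹ʳ =
      ∏ m ∈ range K, rrFactor x m := by
  have hu := isUnit_one_sub_pow_of_pow_eq_zero hx
  have htheta := sum_jacobiTerm_eq_of_pow_eq_zero hx (5 * K + 1)
  rw [sum_jacobiTerm hu K (by omega), Ring.eq_mul_inverse_iff_mul_eq _ _ _
    (isUnit_qPochhammer (isUnit_one_sub_pow_five_pow hu) K)] at htheta
  rw [← schurD_eq_of_pow_eq_zero hx, schurD_eq_sum_schurTerm hu _ (L := 5 * K + 1) (by omega),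
    sum_schurTerm_eq_of_pow_eq_zero hx,
    ← prod_rrFactor_eq_of_pow_eq_zero hx (n := 5 * K) (by omega),
    eq_comm, Ring.eq_mul_inverse_iff_mul_eq _ _ _ (isUnit_qPochhammer hu K),
    ← qPochhammer_eq_of_pow_eq_zero hx (n := 5 * K) (by omega), prod_rrFactor_mul_qPochhammer hu,
    ← htheta, mul_comm]

end Nilpotent

end

theorem map_ringInverse {A B : Type*} [CommRing A] [CommRing B] (f : A →+* B) {u : A}
    (hu : IsUnit u) : f u⁻¹ʳ = (f u)⁻¹ʳ := by
  rw [← one_mul (f u)⁻¹ʳ, Ring.eq_mul_inverse_iff_mul_eq _ _ _ (hu.map f), ← map_mul,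
    Ring.inverse_mul_cancel _ hu, map_one]

theorem map_qPochhammer {A B : Type*} [CommRing A] [CommRing B] (f : A →+* B) (x : A) (n : ℕ) :
    f (qPochhammer x n) = qPochhammer (f x) n := by
  simp [qPochhammer, map_prod]

theorem isUnit_one_sub_X_pow {R : Type*} [CommRing R] (i : ℕ) :
    IsUnit (1 - (X : R⟦X⟧) ^ (i + 1)) := by
  simp [PowerSeries.isUnit_iff_constantCoeff]

theorem coeff_eq_of_mk_eq {R : Type*} [CommRing R] {N : ℕ} {f g : R⟦X⟧}
    (h : Ideal.Quotient.mk (Ideal.span {X ^ (N + 1)}) f = Ideal.Quotient.mk _ g) :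
    coeff N f = coeff N g := by
  rw [Ideal.Quotient.eq, Ideal.mem_span_singleton, X_pow_dvd_iff] at h
  simpa [sub_eq_zero] using h N (by omega)

end RogersRamanujan

open RogersRamanujan in
/-- The Rogers–Ramanujan identity
`Σ_{n≥0} q^{n²}/(q)_n = ∏_{n≥1, n≡±1 mod 5} (1−qⁿ)⁻¹` in `ℤ[[q]]`,
stated coefficientwise: for each `N`, truncating the sum at `n ≤ N` and the
product at factors `1 ≤ m ≤ N+1` computes the exact `N`-th coefficient of both
sides (terms with `n > N` have order `n² > N`, and factors with `m > N` are
`≡ 1 mod q^{N+1}`).  Inverses are the inverses in `ℤ[[q]]` (via `Ring.inverse`,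
which is the genuine inverse since all these series have constant term `1`). -/
theorem stmt11 (N : ℕ) :
    (PowerSeries.coeff (R := ℤ) N)
        (∑ n ∈ Finset.range (N + 1),
          (PowerSeries.X : PowerSeries ℤ) ^ (n ^ 2) * Ring.inverse (qPoch n))
      =
    (PowerSeries.coeff (R := ℤ) N)
        (∏ m ∈ Finset.range (N + 1),
          if (m + 1) % 5 = 1 ∨ (m + 1) % 5 = 4 then
            Ring.inverse (1 - (PowerSeries.X : PowerSeries ℤ) ^ (m + 1))
          else 1) := by
  set π := Ideal.Quotient.mk (Ideal.span {(X : PowerSeries ℤ) ^ (N + 1)})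
  have hX : π X ^ (N + 1) = 0 := by
    rw [← map_pow, Ideal.Quotient.eq_zero_iff_mem]
    exact Ideal.mem_span_singleton_self _
  refine coeff_eq_of_mk_eq ?_
  rw [map_sum, map_prod]
  refine (sum_congr rfl fun n _ => ?_).trans
    ((rogersRamanujan_of_pow_eq_zero hX).trans (prod_congr rfl fun m _ => ?_))
  · rw [show qPoch n = qPochhammer X n from rfl, map_mul, map_pow,
      map_ringInverse π (isUnit_qPochhammer isUnit_one_sub_X_pow n), map_qPochhammer]
  · rw [rrFactor]
    split_ifs
    · rw [map_ringInverse π (isUnit_one_sub_X_pow m)]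
      simp
    · exact map_one π
end

section
/- Define the tropical T-system values 𝔱_a^{(c)}(u) for (a,u) ∈ [1,r]×ℤ by the initial condition 𝔱_a^{(c)}(p) = −δ_{(a,p),(c,0)} for 0 ≤ p < p_a, and the recurrence Σ_{b,p} n⁰_{ba;p} 𝔱_b^{(c)}(u+p) = max(Σ_{b,p} n⁻_{ba;p} 𝔱_b^{(c)}(u+p), Σ_{b,p} n⁺_{ba;p} 𝔱_b^{(c)}(u+p)) for all (a,u). Then for any a ∈ [1,r]: 𝔱_a^{(c)}(p_a) = 1 if a = σ(c) and 0 otherwise. -/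
open Finset

theorem stmt13 (r : ℕ) (σ : Equiv.Perm (Fin r)) (pvec : Fin r → ℕ)
    (hpvec : ∀ a, 0 < pvec a)
    (n0 np nm : Fin r → Fin r → ℤ → ℤ)
    -- (N1)
    (hN1 : ∀ a b (p : ℤ), n0 a b p =
      (if a = b ∧ p = 0 then 1 else 0) + (if a = σ b ∧ p = (pvec a : ℤ) then 1 else 0))
    -- (N2)
    (hN2 : ∀ a b (p : ℤ), 0 ≤ np a b p ∧ 0 ≤ nm a b p)
    -- (N3)
    (hN3 : ∀ a b (p : ℤ), ¬(0 < p ∧ p < (pvec a : ℤ)) → np a b p = 0 ∧ nm a b p = 0)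
    -- (N4)
    (hN4 : ∀ a b (p : ℤ), np a b p * nm a b p = 0)
    (c : Fin r) (t : Fin r → ℤ → ℤ)
    -- initial condition 𝔱_a^{(c)}(p) = −δ_{(a,p),(c,0)} for 0 ≤ p < p_a
    (hinit : ∀ a (p : ℤ), 0 ≤ p → p < (pvec a : ℤ) →
      t a p = if a = c ∧ p = 0 then -1 else 0)
    -- the tropical T-system recurrence, for all (a,u)
    (hrec : ∀ a (u : ℤ),
      ∑ b, ∑ p ∈ Finset.Icc (0 : ℤ) ((Finset.univ.sup pvec : ℕ) : ℤ),
          n0 b a p * t b (u + p)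
        =
      max
        (∑ b, ∑ p ∈ Finset.Icc (0 : ℤ) ((Finset.univ.sup pvec : ℕ) : ℤ),
            nm b a p * t b (u + p))
        (∑ b, ∑ p ∈ Finset.Icc (0 : ℤ) ((Finset.univ.sup pvec : ℕ) : ℤ),
            np b a p * t b (u + p))) :
    ∀ a, t a ((pvec a : ℤ)) = if a = σ c then 1 else 0 := by
  intro a
  have hM : ∀ b : Fin r, (pvec b : ℤ) ≤ ((Finset.univ.sup pvec : ℕ) : ℤ) := fun b => by
    exact_mod_cast Nat.cast_le.mpr (Finset.le_sup (Finset.mem_univ b))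
  set M : ℤ := ((Finset.univ.sup pvec : ℕ) : ℤ) with hMdef
  have key : ∀ d : Fin r, t (σ d) ((pvec (σ d) : ℤ)) = if d = c then 1 else 0 := by
    intro d
    have hrec0 := hrec d 0
    -- right-hand sums vanish
    have hzero : ∀ (n : Fin r → Fin r → ℤ → ℤ),
        (∀ b p, ¬(0 < p ∧ p < (pvec b : ℤ)) → n b d p = 0) →
        (∑ b, ∑ p ∈ Finset.Icc (0 : ℤ) M, n b d p * t b (0 + p)) = 0 := by
      intro n hn
      refine Finset.sum_eq_zero fun b _ => Finset.sum_eq_zero fun p hp => ?_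
      by_cases h : 0 < p ∧ p < (pvec b : ℤ)
      · have ht : t b (0 + p) = 0 := by
          rw [zero_add, hinit b p (le_of_lt h.1) h.2]
          simp [h.1.ne']
        rw [ht, mul_zero]
      · rw [hn b p h, zero_mul]
    have hzm := hzero nm (fun b p h => (hN3 b d p h).2)
    have hzp := hzero np (fun b p h => (hN3 b d p h).1)
    -- left-hand sum
    have hL : (∑ b, ∑ p ∈ Finset.Icc (0 : ℤ) M, n0 b d p * t b (0 + p))
        = t d 0 + t (σ d) ((pvec (σ d) : ℤ)) := by
      have h1 : ∀ b : Fin r, (∑ p ∈ Finset.Icc (0 : ℤ) M, n0 b d p * t b (0 + p))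
          = (if b = d then t d 0 else 0) + (if b = σ d then t b ((pvec b : ℤ)) else 0) := by
        intro b
        have hterm : ∀ p : ℤ, n0 b d p * t b (0 + p)
            = (if p = 0 then (if b = d then t d 0 else 0) else 0)
              + (if p = (pvec b : ℤ) then (if b = σ d then t b ((pvec b : ℤ)) else 0) else 0) := by
          intro p
          rw [hN1, add_mul]
          congr 1
          · by_cases h2 : p = 0
            · subst h2
              by_cases h1 : b = d
              · subst h1; simp
              · simp [h1]
            · simp [h2]
          · by_cases h4 : p = (pvec b : ℤ)
            · subst h4
              by_cases h3 : b = σ d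
              · simp [h3]
              · simp [h3]
            · simp [h4]
        rw [Finset.sum_congr rfl fun p _ => hterm p, Finset.sum_add_distrib,
          Finset.sum_ite_eq' (Finset.Icc (0:ℤ) M) 0,
          Finset.sum_ite_eq' (Finset.Icc (0:ℤ) M) ((pvec b : ℤ))]
        have h0mem : (0:ℤ) ∈ Finset.Icc (0:ℤ) M := by
          simp [Finset.mem_Icc]
          exact le_trans (by exact_mod_cast (hpvec b).le) (hM b)
        have hpmem : ((pvec b : ℤ)) ∈ Finset.Icc (0:ℤ) M := by
          simp [Finset.mem_Icc, hM b]
        rw [if_pos h0mem, if_pos hpmem]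
      rw [Finset.sum_congr rfl fun b _ => h1 b, Finset.sum_add_distrib,
        Finset.sum_ite_eq' Finset.univ d, Finset.sum_ite_eq' Finset.univ (σ d)]
      simp
    rw [hL, hzm, hzp, max_self] at hrec0
    have hd0 : t d 0 = if d = c then -1 else 0 := by
      have := hinit d 0 le_rfl (by exact_mod_cast hpvec d)
      simpa using this
    rw [hd0] at hrec0
    by_cases hdc : d = c <;> simp [hdc] at hrec0 ⊢ <;> linarith
  have := key (σ.symm a)
  rw [Equiv.apply_symm_apply] at this
  rw [this]
  congr 1
  exact propext (Equiv.symm_apply_eq σ)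
end

section
/- With the tropical T-system as above, for any a ∈ [1,r] and 0 ≤ p ≤ p_c, the backward values satisfy: 𝔱_a^{(c)}(−p) = −1 if (a,p) = (c,0); 𝔱_a^{(c)}(−p) = 1 if (a,p) = (σ⁻¹(c), p_c); and 𝔱_a^{(c)}(−p) = 0 otherwise. -/
open Finset

lemma sum_delta (r M : ℕ) (f : Fin r → ℤ → ℤ) (a0 : Fin r) (q0 : Fin r → ℤ)
    (h0 : 0 ≤ q0 a0) (h1 : q0 a0 ≤ (M : ℤ)) :
    ∑ b, ∑ q ∈ Finset.Icc (0:ℤ) (M:ℤ),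
      (if b = a0 ∧ q = q0 b then 1 else 0) * f b q = f a0 (q0 a0) := by
  rw [Finset.sum_eq_single a0]
  · rw [Finset.sum_eq_single (q0 a0)]
    · simp
    · intro q hq hne; simp [hne]
    · intro h; exact absurd (Finset.mem_Icc.2 ⟨h0, h1⟩) h
  · intro b _ hne; apply Finset.sum_eq_zero; intro q _; simp [hne]
  · simp

lemma sum_delta2 (r M : ℕ) (g : Fin r → ℤ → ℤ) (a0 : Fin r) (q0 : ℤ)
    (h0 : 0 ≤ q0) (h1 : q0 ≤ (M : ℤ)) :
    ∑ b, ∑ q ∈ Finset.Icc (0:ℤ) (M:ℤ),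
      (if b = a0 ∧ q = q0 then g b q else 0) = g a0 q0 := by
  rw [Finset.sum_eq_single a0]
  · rw [Finset.sum_eq_single q0]
    · simp
    · intro q hq hne; simp [hne]
    · intro h; exact absurd (Finset.mem_Icc.2 ⟨h0, h1⟩) h
  · intro b _ hne; apply Finset.sum_eq_zero; intro q _; simp [hne]
  · simp

theorem stmt14 (r : ℕ) (σ : Equiv.Perm (Fin r)) (pvec : Fin r → ℕ)
    (hpvec : ∀ a, 0 < pvec a)
    (n0 np nm : Fin r → Fin r → ℤ → ℤ)
    -- (N1)
    (hN1 : ∀ a b (p : ℤ), n0 a b p =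
      (if a = b ∧ p = 0 then 1 else 0) + (if a = σ b ∧ p = (pvec a : ℤ) then 1 else 0))
    -- (N2)
    (hN2 : ∀ a b (p : ℤ), 0 ≤ np a b p ∧ 0 ≤ nm a b p)
    -- (N3)
    (hN3 : ∀ a b (p : ℤ), ¬(0 < p ∧ p < (pvec a : ℤ)) → np a b p = 0 ∧ nm a b p = 0)
    -- (N4)
    (hN4 : ∀ a b (p : ℤ), np a b p * nm a b p = 0)
    (c : Fin r) (t : Fin r → ℤ → ℤ)
    -- initial condition 𝔱_a^{(c)}(p) = −δ_{(a,p),(c,0)} for 0 ≤ p < p_a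
    (hinit : ∀ a (p : ℤ), 0 ≤ p → p < (pvec a : ℤ) →
      t a p = if a = c ∧ p = 0 then -1 else 0)
    -- the tropical T-system recurrence, for all (a,u)
    (hrec : ∀ a (u : ℤ),
      ∑ b, ∑ p ∈ Finset.Icc (0 : ℤ) ((Finset.univ.sup pvec : ℕ) : ℤ),
          n0 b a p * t b (u + p)
        =
      max
        (∑ b, ∑ p ∈ Finset.Icc (0 : ℤ) ((Finset.univ.sup pvec : ℕ) : ℤ),
            nm b a p * t b (u + p))
        (∑ b, ∑ p ∈ Finset.Icc (0 : ℤ) ((Finset.univ.sup pvec : ℕ) : ℤ),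
            np b a p * t b (u + p))) :
    ∀ a, ∀ p : ℤ, 0 ≤ p → p ≤ (pvec c : ℤ) →
      t a (-p) =
        if a = c ∧ p = 0 then -1
        else if a = σ.symm c ∧ p = (pvec c : ℤ) then 1
        else 0 := by
  set M : ℕ := Finset.univ.sup pvec with hM
  have hle : ∀ b, (pvec b : ℤ) ≤ (M : ℤ) := fun b => by
    exact_mod_cast Finset.le_sup (Finset.mem_univ b)
  -- rewrite the LHS of the recurrence
  have hLHS : ∀ a (u : ℤ),
      ∑ b, ∑ q ∈ Finset.Icc (0:ℤ) (M:ℤ), n0 b a q * t b (u + q)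
        = t a u + t (σ a) (u + (pvec (σ a) : ℤ)) := by
    intro a u
    have h1 := sum_delta r M (fun b q => t b (u + q)) a (fun _ => 0) le_rfl
      (by simp)
    have h2 := sum_delta r M (fun b q => t b (u + q)) (σ a) (fun b => (pvec b : ℤ))
      (by positivity) (hle _)
    calc ∑ b, ∑ q ∈ Finset.Icc (0:ℤ) (M:ℤ), n0 b a q * t b (u + q)
        = ∑ b, ∑ q ∈ Finset.Icc (0:ℤ) (M:ℤ),
            ((if b = a ∧ q = 0 then 1 else 0) * t b (u + q)
              + (if b = σ a ∧ q = (pvec b : ℤ) then 1 else 0) * t b (u + q)) := by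
          refine Finset.sum_congr rfl fun b _ => Finset.sum_congr rfl fun q _ => ?_
          rw [hN1, add_mul]
      _ = t a u + t (σ a) (u + (pvec (σ a) : ℤ)) := by
          simp only [Finset.sum_add_distrib]
          rw [h1, h2]; simp
  -- main induction
  have main : ∀ n : ℕ, (n : ℤ) ≤ (pvec c : ℤ) → ∀ a,
      t a (-(n : ℤ)) =
        if a = c ∧ (n : ℤ) = 0 then -1
        else if a = σ.symm c ∧ (n : ℤ) = (pvec c : ℤ) then 1
        else 0 := by
    intro n
    induction n using Nat.strong_induction_on with
    | _ n ih =>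
      intro hn a
      rcases Nat.eq_zero_or_pos n with h0 | hpos
      · subst h0
        simp only [Nat.cast_zero, neg_zero]
        rw [hinit a 0 le_rfl (by exact_mod_cast hpvec a)]
        have hc : ¬((0:ℤ) = (pvec c : ℤ)) := by
          have := hpvec c; omega
        simp [hc]
      · -- key: known values above -n
        have key : ∀ b (v : ℤ), -(n:ℤ) < v → v < (pvec b : ℤ) →
            t b v = if b = c ∧ v = 0 then -1 else 0 := by
          intro b v h1 h2
          rcases le_or_gt 0 v with h | h
          · exact hinit b v h h2
          · have hv : v = -(((-v).toNat : ℕ) : ℤ) := by omega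
            have hmn : (-v).toNat < n := by omega
            have hmc : (((-v).toNat : ℕ) : ℤ) ≤ (pvec c : ℤ) := by omega
            have hval := ih (-v).toNat hmn hmc b
            rw [show -(((-v).toNat : ℕ) : ℤ) = v by omega] at hval
            have h3' : ¬(b = c ∧ v = 0) := by rintro ⟨_, rfl⟩; omega
            rw [hval, if_neg (by rintro ⟨_, h⟩; omega : ¬(b = c ∧ (((-v).toNat : ℕ) : ℤ) = 0)),
              if_neg (by rintro ⟨_, h⟩; omega :
                ¬(b = Equiv.symm σ c ∧ (((-v).toNat : ℕ) : ℤ) = (pvec c : ℤ))), if_neg h3']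
        -- compute the RHS sums
        have hRHS : ∀ m : Fin r → Fin r → ℤ → ℤ,
            (∀ b q, ¬(0 < q ∧ q < (pvec b : ℤ)) → m b a q = 0) →
            ∑ b, ∑ q ∈ Finset.Icc (0:ℤ) (M:ℤ), m b a q * t b (-(n:ℤ) + q)
              = -(m c a (n:ℤ)) := by
          intro m hsupp
          have hd : (∑ b, ∑ q ∈ Finset.Icc (0:ℤ) (M:ℤ),
              if b = c ∧ q = (n:ℤ) then -(m b a q) else 0) = -(m c a (n:ℤ)) :=
            sum_delta2 r M (fun b q => -(m b a q)) c (n:ℤ)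
              (by positivity) (le_trans hn (hle c))
          rw [← hd]
          refine Finset.sum_congr rfl fun b _ => Finset.sum_congr rfl fun q hq => ?_
          by_cases hs : 0 < q ∧ q < (pvec b : ℤ)
          · have ht := key b (-(n:ℤ) + q) (by omega) (by omega)
            rw [ht]
            by_cases hbc : b = c ∧ q = (n:ℤ)
            · obtain ⟨hb, hq'⟩ := hbc
              subst hb; subst hq'
              have h00 : -(n:ℤ) + (n:ℤ) = 0 := by ring
              simp [h00]
            · have h1' : ¬(b = c ∧ -(n:ℤ) + q = 0) := by
                rintro ⟨hb, hv⟩; exact hbc ⟨hb, by omega⟩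
              simp [h1', hbc]
          · have h0 := hsupp b q hs
            simp [h0]
        have hm := hRHS nm (fun b q h => (hN3 b a q h).2)
        have hp := hRHS np (fun b q h => (hN3 b a q h).1)
        have hr := hrec a (-(n:ℤ))
        rw [hLHS, hm, hp] at hr
        have hmax : max (-(nm c a (n:ℤ))) (-(np c a (n:ℤ))) = 0 := by
          have h2 := hN2 c a (n:ℤ)
          rcases mul_eq_zero.1 (hN4 c a (n:ℤ)) with h | h <;> simp [h] <;> omega
        rw [hmax] at hr
        -- value of the second term on the LHS
        have hv := key (σ a) (-(n:ℤ) + (pvec (σ a) : ℤ))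
          (by have := hpvec (σ a); omega) (by omega)
        rw [hv] at hr
        have hn0 : ¬(a = c ∧ (n:ℤ) = 0) := by rintro ⟨_, h⟩; omega
        by_cases hc : σ a = c
        · have ha : a = σ.symm c := by rw [← hc]; simp
          have hpc : (pvec (σ a) : ℤ) = (pvec c : ℤ) := by rw [hc]
          by_cases he : (n:ℤ) = (pvec c : ℤ)
          · have h00 : -(n:ℤ) + (pvec (σ a) : ℤ) = 0 := by omega
            rw [if_pos ⟨hc, h00⟩] at hr
            rw [if_neg hn0, if_pos ⟨ha, he⟩]
            omega
          · have h00 : ¬(σ a = c ∧ -(n:ℤ) + (pvec (σ a) : ℤ) = 0) := by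
              rintro ⟨_, h⟩; omega
            rw [if_neg h00] at hr
            rw [if_neg hn0, if_neg (by rintro ⟨_, h⟩; exact he h)]
            omega
        · have ha : ¬(a = σ.symm c) := by
            intro h; exact hc (by rw [h]; simp)
          have h00 : ¬(σ a = c ∧ -(n:ℤ) + (pvec (σ a) : ℤ) = 0) := fun h => hc h.1
          rw [if_neg h00] at hr
          rw [if_neg hn0, if_neg (by rintro ⟨h, _⟩; exact ha h)]
          omega
  intro a p hp0 hpc
  have hp : p = ((p.toNat : ℕ) : ℤ) := by omega
  rw [hp]
  exact main p.toNat (by omega) a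
end

section
/- Let α = (A₊, A₋, D) be a triple where A_± = N₀ − N_± with (N₀,N₊,N₋) over ℤ[z] satisfying conditions (N1)–(N4), D a positive integer diagonal matrix with N₀D = DN₀, D⁻¹N_±D integral, and A₊DA₋† = A₋DA₊†. Define N_ε^∨ = D⁻¹N_εD and D^∨ = δD⁻¹ where δ is the product of the gcd and lcm of the diagonal entries of D. Then α^∨ = (N₀^∨−N₊^∨, N₀^∨−N₋^∨, D^∨) is again a T-datum, and (α^∨)^∨ = α. -/
open LaurentPolynomial Matrix Finset

/-- The matrix over `ℤ[z]` whose `(a,b)` entry has coefficients `f a b p`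
(supported in `0 ≤ p ≤ p_a`). -/
noncomputable def polyMat (r : ℕ) (pvec : Fin r → ℕ) (f : Fin r → Fin r → ℤ → ℤ) :
    Matrix (Fin r) (Fin r) (LaurentPolynomial ℤ) :=
  fun a b => ∑ p ∈ Finset.Icc (0 : ℤ) ((pvec a : ℕ) : ℤ), LaurentPolynomial.C (f a b p) * T p

/-- `(n0, np, nm, d)` is a T-datum of size `r`: the coefficient data of matrices
`N₀, N₊, N₋ ∈ Mat_r(ℤ[z])` satisfying (N1)–(N4), with a positive integer diagonal
matrix `D = diag d` such that `N₀D = DN₀`, `D⁻¹N₊D` and `D⁻¹N₋D` are integral, and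
`A₊ D A₋† = A₋ D A₊†` where `A_± = N₀ − N_±`. -/
def IsTDatum (r : ℕ) (n0 np nm : Fin r → Fin r → ℤ → ℤ) (d : Fin r → ℤ) : Prop :=
  ∃ (σ : Equiv.Perm (Fin r)) (pvec : Fin r → ℕ),
    (∀ a, 0 < pvec a) ∧
    -- (N1)
    (∀ a b (p : ℤ), n0 a b p =
      (if a = b ∧ p = 0 then 1 else 0) + (if a = σ b ∧ p = (pvec a : ℤ) then 1 else 0)) ∧
    -- (N2)
    (∀ a b (p : ℤ), 0 ≤ np a b p ∧ 0 ≤ nm a b p) ∧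
    -- (N3)
    (∀ a b (p : ℤ), ¬(0 < p ∧ p < (pvec a : ℤ)) → np a b p = 0 ∧ nm a b p = 0) ∧
    -- (N4)
    (∀ a b (p : ℤ), np a b p * nm a b p = 0) ∧
    (∀ a, 0 < d a) ∧
    -- N₀ D = D N₀
    (∀ a b (p : ℤ), n0 a b p * d b = d a * n0 a b p) ∧
    -- D⁻¹ N₊ D and D⁻¹ N₋ D are integral
    (∀ a b (p : ℤ), d a ∣ np a b p * d b) ∧
    (∀ a b (p : ℤ), d a ∣ nm a b p * d b) ∧
    -- the symplectic relation A₊ D A₋† = A₋ D A₊†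
    (polyMat r pvec (fun a b p => n0 a b p - np a b p)
        * (Matrix.diagonal fun i => LaurentPolynomial.C (d i))
        * dagger (polyMat r pvec fun a b p => n0 a b p - nm a b p)
      = polyMat r pvec (fun a b p => n0 a b p - nm a b p)
        * (Matrix.diagonal fun i => LaurentPolynomial.C (d i))
        * dagger (polyMat r pvec fun a b p => n0 a b p - np a b p))

/-- The Langlands dual coefficients: `N^∨ = D⁻¹ N D`, i.e. `ň_{ab;p} = n_{ab;p} d_b / d_a`. -/
def dualN {r : ℕ} (d : Fin r → ℤ) (n : Fin r → Fin r → ℤ → ℤ) : Fin r → Fin r → ℤ → ℤ :=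
  fun a b p => n a b p * d b / d a

/-- The Langlands dual diagonal: `d^∨_a = δ / d_a` with `δ = gcd(d)·lcm(d)`. -/
def dualD {r : ℕ} (d : Fin r → ℤ) : Fin r → ℤ :=
  fun a => (Finset.univ.gcd d * Finset.univ.lcm d) / d a

lemma myC_inj : Function.Injective (LaurentPolynomial.C (R := ℤ)) := by
  intro x y h
  rw [← Polynomial.toLaurent_C, ← Polynomial.toLaurent_C] at h
  exact Polynomial.C_injective (Polynomial.toLaurent_injective h)

lemma myC_ne_zero {x : ℤ} (hx : x ≠ 0) : LaurentPolynomial.C x ≠ 0 := fun h =>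
  hx (myC_inj (h.trans (map_zero _).symm))

lemma my_dagger_mul {r : ℕ} (M N : Matrix (Fin r) (Fin r) (LaurentPolynomial ℤ)) :
    dagger (M * N) = dagger N * dagger M := by
  ext a b
  simp [dagger, Matrix.mul_apply, map_sum, mul_comm]

lemma my_dagger_diagonal {r : ℕ} (v : Fin r → ℤ) :
    dagger (Matrix.diagonal fun i => LaurentPolynomial.C (v i))
      = Matrix.diagonal fun i => LaurentPolynomial.C (v i) := by
  unfold dagger
  rw [Matrix.diagonal_map (map_zero _), Matrix.diagonal_transpose]
  simp [invert_C]

lemma my_div_dvd_div {a b c : ℤ} (ha : a ≠ 0) (hb : b ≠ 0) (hab : a ∣ b) (hbc : b ∣ c) :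
    c / b ∣ c / a := by
  obtain ⟨k, rfl⟩ := hab
  obtain ⟨m, rfl⟩ := hbc
  rw [Int.mul_ediv_cancel_left _ hb, mul_assoc, Int.mul_ediv_cancel_left _ ha]
  exact dvd_mul_left m k


lemma my_lcm_ne_zero {r : ℕ} (d : Fin r → ℤ) (hd : ∀ a, 0 < d a) :
    Finset.univ.lcm d ≠ 0 := by
  intro h0
  rw [Finset.lcm_eq_zero_iff] at h0
  obtain ⟨a, -, ha⟩ := h0
  exact (hd a).ne' ha

lemma my_gcd_ne_zero {r : ℕ} (d : Fin r → ℤ) (a0 : Fin r) (hd : ∀ a, 0 < d a) :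
    Finset.univ.gcd d ≠ 0 := by
  intro h0
  rw [Finset.gcd_eq_zero_iff] at h0
  exact (hd a0).ne' (h0 a0 (Finset.mem_univ a0))

lemma my_gcd_div {r : ℕ} (d : Fin r → ℤ) (a0 : Fin r) (hd : ∀ a, 0 < d a)
    (δ : ℤ) (hδ : 0 < δ) (hdvd : ∀ a, d a ∣ δ) :
    Finset.univ.gcd (fun a => δ / d a) = δ / Finset.univ.lcm d := by
  have hL0 : Finset.univ.lcm d ≠ 0 := my_lcm_ne_zero d hd
  have hLδ : Finset.univ.lcm d ∣ δ := Finset.lcm_dvd fun a _ => hdvd a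
  apply Int.dvd_antisymm (Int.nonneg_of_normalize_eq_self Finset.normalize_gcd)
    (Int.ediv_nonneg hδ.le (Int.nonneg_of_normalize_eq_self Finset.normalize_lcm))
  · have hgdvd : ∀ a, Finset.univ.gcd (fun a => δ / d a) ∣ δ / d a :=
      fun a => Finset.gcd_dvd (Finset.mem_univ a)
    generalize hg : Finset.univ.gcd (fun a => δ / d a) = g at hgdvd ⊢
    have hgnz : g ≠ 0 := by
      intro h0
      have h1 := hgdvd a0
      rw [h0, zero_dvd_iff] at h1
      have h2 := Int.ediv_mul_cancel (hdvd a0)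
      rw [h1, zero_mul] at h2
      exact hδ.ne' h2.symm
    have h1 : ∀ a, d a ∣ δ / g := by
      intro a
      obtain ⟨t, ht⟩ := hgdvd a
      have hδeq : δ = g * (t * d a) := by
        rw [← Int.ediv_mul_cancel (hdvd a), ht]; ring
      rw [hδeq, Int.mul_ediv_cancel_left _ hgnz]
      exact dvd_mul_left (d a) t
    obtain ⟨s, hs⟩ := Finset.lcm_dvd (fun a (_ : a ∈ Finset.univ) => h1 a)
    have hgδ : g ∣ δ := (hgdvd a0).trans ⟨d a0, (Int.ediv_mul_cancel (hdvd a0)).symm⟩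
    have hδ2 : δ = Finset.univ.lcm d * (g * s) := by
      rw [← Int.mul_ediv_cancel' hgδ, hs]; ring
    rw [hδ2, Int.mul_ediv_cancel_left _ hL0]
    exact ⟨s, rfl⟩
  · apply Finset.dvd_gcd
    intro a _
    exact my_div_dvd_div (hd a).ne' hL0 (Finset.dvd_lcm (Finset.mem_univ a)) hLδ

lemma my_lcm_div {r : ℕ} (d : Fin r → ℤ) (a0 : Fin r) (hd : ∀ a, 0 < d a)
    (δ : ℤ) (hδ : 0 < δ) (hdvd : ∀ a, d a ∣ δ) :
    Finset.univ.lcm (fun a => δ / d a) = δ / Finset.univ.gcd d := by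
  have hG0 : Finset.univ.gcd d ≠ 0 := my_gcd_ne_zero d a0 hd
  have hGδ : Finset.univ.gcd d ∣ δ := (Finset.gcd_dvd (Finset.mem_univ a0)).trans (hdvd a0)
  apply Int.dvd_antisymm (Int.nonneg_of_normalize_eq_self Finset.normalize_lcm)
    (Int.ediv_nonneg hδ.le (Int.nonneg_of_normalize_eq_self Finset.normalize_gcd))
  · apply Finset.lcm_dvd
    intro a _
    exact my_div_dvd_div hG0 (hd a).ne' (Finset.gcd_dvd (Finset.mem_univ a)) (hdvd a)
  · have hL'nn : 0 ≤ Finset.univ.lcm (fun a => δ / d a) :=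
      Int.nonneg_of_normalize_eq_self Finset.normalize_lcm
    have h1 : ∀ a, δ ∣ Finset.univ.lcm (fun a => δ / d a) * d a := by
      intro a
      calc δ = (δ / d a) * d a := (Int.ediv_mul_cancel (hdvd a)).symm
        _ ∣ _ := mul_dvd_mul_right (Finset.dvd_lcm (Finset.mem_univ a)) (d a)
    have h2 : δ ∣ Finset.univ.lcm (fun a => δ / d a) * Finset.univ.gcd d := by
      have h3 : δ ∣ Finset.univ.gcd (fun a => Finset.univ.lcm (fun a => δ / d a) * d a) :=
        Finset.dvd_gcd fun a _ => h1 a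
      rwa [Finset.gcd_mul_left, Int.normalize_of_nonneg hL'nn] at h3
    obtain ⟨u, hu⟩ := h2
    refine ⟨u, mul_right_cancel₀ hG0 ?_⟩
    have h5 : (δ / Finset.univ.gcd d) * Finset.univ.gcd d = δ := Int.ediv_mul_cancel hGδ
    linear_combination hu - u * h5

theorem stmt17 (r : ℕ) (n0 np nm : Fin r → Fin r → ℤ → ℤ) (d : Fin r → ℤ)
    (h : IsTDatum r n0 np nm d) :
    IsTDatum r (dualN d n0) (dualN d np) (dualN d nm) (dualD d) ∧
    dualN (dualD d) (dualN d n0) = n0 ∧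
    dualN (dualD d) (dualN d np) = np ∧
    dualN (dualD d) (dualN d nm) = nm ∧
    dualD (dualD d) = d := by
  obtain ⟨σ, pvec, hp, hN1, hN2, hN3, hN4, hdpos, hcomm, hdvp, hdvm, hsym⟩ := h
  have hdne : ∀ a, d a ≠ 0 := fun a => (hdpos a).ne'
  have hdδ : ∀ a, d a ∣ Finset.univ.gcd d * Finset.univ.lcm d := fun a =>
    (Finset.dvd_lcm (Finset.mem_univ a)).trans (dvd_mul_left _ _)
  have hdn0 : dualN d n0 = n0 := by
    funext a b p
    show n0 a b p * d b / d a = n0 a b p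
    rw [hcomm a b p, Int.mul_ediv_cancel_left _ (hdne a)]
  have hdup : ∀ a b (p : ℤ), dualN d np a b p * d a = np a b p * d b :=
    fun a b p => Int.ediv_mul_cancel (hdvp a b p)
  have hdum : ∀ a b (p : ℤ), dualN d nm a b p * d a = nm a b p * d b :=
    fun a b p => Int.ediv_mul_cancel (hdvm a b p)
  have hDd : ∀ a, dualD d a * d a = Finset.univ.gcd d * Finset.univ.lcm d :=
    fun a => Int.ediv_mul_cancel (hdδ a)
  have key : ∀ (n : Fin r → Fin r → ℤ → ℤ),
      (∀ a b (p : ℤ), dualN d n a b p * d a = n a b p * d b) →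
      ∀ a b (p : ℤ), dualN d n a b p * dualD d b = dualD d a * n a b p := by
    intro n hn a b p
    have h4 : (dualN d n a b p * dualD d b) * (d a * d b)
        = (dualD d a * n a b p) * (d a * d b) := by
      calc (dualN d n a b p * dualD d b) * (d a * d b)
          = (dualN d n a b p * d a) * (dualD d b * d b) := by ring
        _ = (n a b p * d b) * (Finset.univ.gcd d * Finset.univ.lcm d) := by
            rw [hn, hDd]
        _ = (dualD d a * d a) * n a b p * d b := by rw [hDd]; ring
        _ = (dualD d a * n a b p) * (d a * d b) := by ring
    exact mul_right_cancel₀ (mul_ne_zero (hdne a) (hdne b)) h4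
  have keyp := key np hdup
  have keym := key nm hdum
  have hcommv : ∀ a b (p : ℤ), n0 a b p * dualD d b = dualD d a * n0 a b p := by
    intro a b p
    by_cases h0 : n0 a b p = 0
    · rw [h0, zero_mul, mul_zero]
    · have hab : d b = d a := by
        have h5 := hcomm a b p
        rw [mul_comm (d a) (n0 a b p)] at h5
        exact mul_left_cancel₀ h0 h5
      rw [show dualD d b = dualD d a from by unfold dualD; rw [hab], mul_comm]
  have hδpos : ∀ _a0 : Fin r, 0 < Finset.univ.gcd d * Finset.univ.lcm d := fun a0 =>
    lt_of_le_of_ne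
      (mul_nonneg (Int.nonneg_of_normalize_eq_self Finset.normalize_gcd)
        (Int.nonneg_of_normalize_eq_self Finset.normalize_lcm))
      (fun h5 =>
        mul_ne_zero (my_gcd_ne_zero d a0 hdpos) (my_lcm_ne_zero d hdpos) h5.symm)
  have hdDpos : ∀ a, 0 < dualD d a := by
    intro a
    have hnn : (0:ℤ) ≤ dualD d a := Int.ediv_nonneg (hδpos a).le (hdpos a).le
    rcases hnn.lt_or_eq with h5 | h5
    · exact h5
    · exfalso
      have h6 := hDd a
      rw [← h5, zero_mul] at h6
      exact (hδpos a).ne' h6.symm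
  have hdd : ∀ (n : Fin r → Fin r → ℤ → ℤ),
      (∀ a b (p : ℤ), dualN d n a b p * dualD d b = dualD d a * n a b p) →
      dualN (dualD d) (dualN d n) = n := by
    intro n hkey
    funext a b p
    show dualN d n a b p * dualD d b / dualD d a = n a b p
    rw [hkey, Int.mul_ediv_cancel_left _ (hdDpos a).ne']
  have hddn0 : dualN (dualD d) n0 = n0 := by
    funext a b p
    show n0 a b p * dualD d b / dualD d a = n0 a b p
    rw [hcommv, Int.mul_ediv_cancel_left _ (hdDpos a).ne']
  have hddD : dualD (dualD d) = d := by
    funext a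
    have hg : Finset.univ.gcd (dualD d)
        = (Finset.univ.gcd d * Finset.univ.lcm d) / Finset.univ.lcm d :=
      my_gcd_div d a hdpos _ (hδpos a) hdδ
    have hl : Finset.univ.lcm (dualD d)
        = (Finset.univ.gcd d * Finset.univ.lcm d) / Finset.univ.gcd d :=
      my_lcm_div d a hdpos _ (hδpos a) hdδ
    have hG : (Finset.univ.gcd d * Finset.univ.lcm d) / Finset.univ.lcm d
        = Finset.univ.gcd d := Int.mul_ediv_cancel _ (my_lcm_ne_zero d hdpos)
    have hL : (Finset.univ.gcd d * Finset.univ.lcm d) / Finset.univ.gcd d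
        = Finset.univ.lcm d := by
      rw [mul_comm]; exact Int.mul_ediv_cancel _ (my_gcd_ne_zero d a hdpos)
    show Finset.univ.gcd (dualD d) * Finset.univ.lcm (dualD d) / dualD d a = d a
    rw [hg, hl, hG, hL, ← hDd a]
    exact Int.mul_ediv_cancel_left _ (hdDpos a).ne'
  rw [hdn0]
  refine ⟨⟨σ, pvec, hp, hN1, ?_, ?_, ?_, hdDpos, hcommv, ?_, ?_, ?_⟩,
    hddn0, hdd np keyp, hdd nm keym, hddD⟩
  · -- (N2)
    intro a b p
    exact ⟨Int.ediv_nonneg (mul_nonneg (hN2 a b p).1 (hdpos b).le) (hdpos a).le,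
      Int.ediv_nonneg (mul_nonneg (hN2 a b p).2 (hdpos b).le) (hdpos a).le⟩
  · -- (N3)
    intro a b p hcond
    obtain ⟨h1, h2⟩ := hN3 a b p hcond
    constructor
    · show np a b p * d b / d a = 0
      rw [h1, zero_mul, Int.zero_ediv]
    · show nm a b p * d b / d a = 0
      rw [h2, zero_mul, Int.zero_ediv]
  · -- (N4)
    intro a b p
    rcases mul_eq_zero.mp (hN4 a b p) with h1 | h1
    · have : dualN d np a b p = 0 := by
        show np a b p * d b / d a = 0
        rw [h1, zero_mul, Int.zero_ediv]
      rw [this, zero_mul]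
    · have : dualN d nm a b p = 0 := by
        show nm a b p * d b / d a = 0
        rw [h1, zero_mul, Int.zero_ediv]
      rw [this, mul_zero]
  · -- D∨ divides N₊∨ D∨
    intro a b p
    rw [keyp a b p]
    exact dvd_mul_right _ _
  · -- D∨ divides N₋∨ D∨
    intro a b p
    rw [keym a b p]
    exact dvd_mul_right _ _
  · -- the symplectic relation for the dual
    have swap : ∀ (n : Fin r → Fin r → ℤ → ℤ),
        (∀ a b (p : ℤ), d a * (n0 a b p - dualN d n a b p)
          = (n0 a b p - n a b p) * d b) →
        (Matrix.diagonal fun i => LaurentPolynomial.C (d i))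
            * polyMat r pvec (fun a b p => n0 a b p - dualN d n a b p)
          = polyMat r pvec (fun a b p => n0 a b p - n a b p)
            * (Matrix.diagonal fun i => LaurentPolynomial.C (d i)) := by
      intro n hn
      refine Matrix.ext fun a b => ?_
      rw [Matrix.diagonal_mul, Matrix.mul_diagonal]
      simp only [polyMat]
      rw [Finset.mul_sum, Finset.sum_mul]
      apply Finset.sum_congr rfl
      intro p _
      calc LaurentPolynomial.C (d a)
            * (LaurentPolynomial.C (n0 a b p - dualN d n a b p) * T p)
          = LaurentPolynomial.C (d a * (n0 a b p - dualN d n a b p)) * T p := by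
            rw [← mul_assoc, ← _root_.map_mul]
        _ = LaurentPolynomial.C ((n0 a b p - n a b p) * d b) * T p := by rw [hn]
        _ = LaurentPolynomial.C (n0 a b p - n a b p) * T p
            * LaurentPolynomial.C (d b) := by rw [_root_.map_mul]; ring
    have hswp := swap np (fun a b p => by
      have h1 := hdup a b p
      have h2 := hcomm a b p
      linear_combination - h2 - h1)
    have hswm := swap nm (fun a b p => by
      have h1 := hdum a b p
      have h2 := hcomm a b p
      linear_combination - h2 - h1)
    have hDDV : (Matrix.diagonal fun i => LaurentPolynomial.C (d i))
        * (Matrix.diagonal fun i => LaurentPolynomial.C (dualD d i))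
        = (LaurentPolynomial.C (Finset.univ.gcd d * Finset.univ.lcm d))
            • (1 : Matrix (Fin r) (Fin r) (LaurentPolynomial ℤ)) := by
      rw [Matrix.diagonal_mul_diagonal]
      refine Matrix.ext fun i j => ?_
      by_cases hij : i = j
      · subst hij
        rw [Matrix.diagonal_apply_eq, Matrix.smul_apply, Matrix.one_apply_eq,
          smul_eq_mul, mul_one, ← _root_.map_mul, mul_comm (d i) (dualD d i), hDd i]
      · rw [Matrix.diagonal_apply_ne _ hij, Matrix.smul_apply,
          Matrix.one_apply_ne hij, smul_eq_mul, mul_zero]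
    have transform : ∀ X Y Xo Yo : Matrix (Fin r) (Fin r) (LaurentPolynomial ℤ),
        (Matrix.diagonal fun i => LaurentPolynomial.C (d i)) * X
          = Xo * (Matrix.diagonal fun i => LaurentPolynomial.C (d i)) →
        (Matrix.diagonal fun i => LaurentPolynomial.C (d i)) * Y
          = Yo * (Matrix.diagonal fun i => LaurentPolynomial.C (d i)) →
        (Matrix.diagonal fun i => LaurentPolynomial.C (d i))
            * (X * (Matrix.diagonal fun i => LaurentPolynomial.C (dualD d i))
              * dagger Y)
            * (Matrix.diagonal fun i => LaurentPolynomial.C (d i))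
          = (LaurentPolynomial.C (Finset.univ.gcd d * Finset.univ.lcm d))
              • (Xo * (Matrix.diagonal fun i => LaurentPolynomial.C (d i))
                * dagger Yo) := by
      intro X Y Xo Yo hX hY
      have hdY : dagger Y * (Matrix.diagonal fun i => LaurentPolynomial.C (d i))
          = (Matrix.diagonal fun i => LaurentPolynomial.C (d i)) * dagger Yo := by
        have h5 := congrArg dagger hY
        rw [my_dagger_mul, my_dagger_mul, my_dagger_diagonal] at h5
        exact h5
      calc (Matrix.diagonal fun i => LaurentPolynomial.C (d i))
            * (X * (Matrix.diagonal fun i => LaurentPolynomial.C (dualD d i))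
              * dagger Y)
            * (Matrix.diagonal fun i => LaurentPolynomial.C (d i))
          = ((Matrix.diagonal fun i => LaurentPolynomial.C (d i)) * X)
            * ((Matrix.diagonal fun i => LaurentPolynomial.C (dualD d i))
              * (dagger Y * (Matrix.diagonal fun i => LaurentPolynomial.C (d i)))) := by
            simp only [Matrix.mul_assoc]
        _ = ((Matrix.diagonal fun i => LaurentPolynomial.C (d i)) * X)
            * ((Matrix.diagonal fun i => LaurentPolynomial.C (dualD d i))
              * ((Matrix.diagonal fun i => LaurentPolynomial.C (d i)) * dagger Yo)) := by
            rw [hdY]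
        _ = Xo * (((Matrix.diagonal fun i => LaurentPolynomial.C (d i))
              * (Matrix.diagonal fun i => LaurentPolynomial.C (dualD d i)))
              * ((Matrix.diagonal fun i => LaurentPolynomial.C (d i)) * dagger Yo)) := by
            rw [hX]; simp only [Matrix.mul_assoc]
        _ = Xo * (((LaurentPolynomial.C (Finset.univ.gcd d * Finset.univ.lcm d))
              • (1 : Matrix (Fin r) (Fin r) (LaurentPolynomial ℤ)))
              * ((Matrix.diagonal fun i => LaurentPolynomial.C (d i)) * dagger Yo)) := by
            rw [hDDV]
        _ = (LaurentPolynomial.C (Finset.univ.gcd d * Finset.univ.lcm d))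
              • (Xo * ((Matrix.diagonal fun i => LaurentPolynomial.C (d i))
                * dagger Yo)) := by
            rw [Matrix.smul_mul, Matrix.one_mul, Matrix.mul_smul]
        _ = (LaurentPolynomial.C (Finset.univ.gcd d * Finset.univ.lcm d))
              • (Xo * (Matrix.diagonal fun i => LaurentPolynomial.C (d i))
                * dagger Yo) := by
            rw [Matrix.mul_assoc]
    have hmat : (Matrix.diagonal fun i => LaurentPolynomial.C (d i))
        * (polyMat r pvec (fun a b p => n0 a b p - dualN d np a b p)
          * (Matrix.diagonal fun i => LaurentPolynomial.C (dualD d i))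
          * dagger (polyMat r pvec fun a b p => n0 a b p - dualN d nm a b p))
        * (Matrix.diagonal fun i => LaurentPolynomial.C (d i))
        = (Matrix.diagonal fun i => LaurentPolynomial.C (d i))
        * (polyMat r pvec (fun a b p => n0 a b p - dualN d nm a b p)
          * (Matrix.diagonal fun i => LaurentPolynomial.C (dualD d i))
          * dagger (polyMat r pvec fun a b p => n0 a b p - dualN d np a b p))
        * (Matrix.diagonal fun i => LaurentPolynomial.C (d i)) := by
      rw [transform _ _ _ _ hswp hswm, transform _ _ _ _ hswm hswp, hsym]
    refine Matrix.ext fun a c => ?_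
    have h3 := congrFun (congrFun hmat a) c
    rw [Matrix.mul_diagonal, Matrix.mul_diagonal, Matrix.diagonal_mul,
      Matrix.diagonal_mul] at h3
    exact mul_left_cancel₀ (myC_ne_zero (hdne a))
      (mul_right_cancel₀ (myC_ne_zero (hdne c)) h3)
end
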